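/- arXiv:1611.07607 — 8 statements merged into one kernel-verified Lean document; each statement's English description precedes it below -/
import Mathlib

section
/- Let N ≥ 1, let Ω ⊆ ℝ^N be a measurable set equipped with a finite measure, let ψ : ℝ^N → [0,∞) be measurable with ψ(−z) = ψ(z) for all z, and let x ↦ ν_x be a measurable family (Markov kernel) of probability measures on [0,∞) × ℝ^N indexed by x ∈ Ω. Define ρ(x) = ∫ s dν_x(s,v), m(x) = ∫ s v dν_x(s,v) ∈ ℝ^N and e(x) = ∫ s|v|² dν_x(s,v), and assume the functions (x,y) ↦ ψ(x−y) e(x) ρ(y), (x,y) ↦ ψ(x−y) |m(x)| |m(y)| and (x,y) ↦ ψ(x−y) ρ(x) e(y) are integrable on Ω × Ω. Then ∫_Ω ∫_Ω ( e(x) ρ(y) − m(x) · m(y) ) ψ(x−y) dy dx ≥ 0. -/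
open MeasureTheory
open scoped RealInnerProductSpace

/-!
By Cauchy–Schwarz in `L²(s dν_x)`, `|m(x)|² ≤ ρ(x) e(x)`; with AM–GM this gives
`2 m(x)·m(y) ≤ e(x) ρ(y) + ρ(x) e(y)`. Since `ψ` is even, the integrand plus its image under
`x ↔ y` is therefore nonnegative, and by Fubini the double integral is half the integral of
this symmetrization.
-/

theorem sq_norm_integral_smul_le {α E : Type*} [MeasurableSpace α] [NormedAddCommGroup E]
    [NormedSpace ℝ E] {μ : Measure α} {s : α → ℝ} {v : α → E} (hs : ∀ᵐ a ∂μ, 0 ≤ s a)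
    (hs_int : Integrable s μ) (hsv_int : Integrable (fun a => s a * ‖v a‖ ^ 2) μ) :
    ‖∫ a, s a • v a ∂μ‖ ^ 2 ≤ (∫ a, s a ∂μ) * ∫ a, s a * ‖v a‖ ^ 2 ∂μ := by
  set f := fun a => √(s a)
  set g := fun a => √(s a * ‖v a‖ ^ 2)
  have hf_sq : ∀ᵐ a ∂μ, f a ^ 2 = s a := by
    filter_upwards [hs] with a ha using Real.sq_sqrt ha
  have hg_sq : ∀ᵐ a ∂μ, g a ^ 2 = s a * ‖v a‖ ^ 2 := by
    filter_upwards [hs] with a ha using Real.sq_sqrt (by positivity)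
  have hf : MemLp f (ENNReal.ofReal 2) μ := by
    rw [ENNReal.ofReal_ofNat, memLp_two_iff_integrable_sq
      (Real.continuous_sqrt.comp_aestronglyMeasurable hs_int.aestronglyMeasurable)]
    exact hs_int.congr (hf_sq.mono fun a ha => ha.symm)
  have hg : MemLp g (ENNReal.ofReal 2) μ := by
    rw [ENNReal.ofReal_ofNat, memLp_two_iff_integrable_sq
      (Real.continuous_sqrt.comp_aestronglyMeasurable hsv_int.aestronglyMeasurable)]
    exact hsv_int.congr (hg_sq.mono fun a ha => ha.symm)
  have holder := integral_mul_le_Lp_mul_Lq_of_nonneg Real.HolderConjugate.two_two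
    (ae_of_all _ fun a => Real.sqrt_nonneg _) (ae_of_all _ fun a => Real.sqrt_nonneg _) hf hg
  have hfg : ∫ a, f a * g a ∂μ = ∫ a, ‖s a • v a‖ ∂μ := by
    refine integral_congr_ae ?_
    filter_upwards [hs] with a ha
    rw [← Real.sqrt_mul ha, norm_smul, Real.norm_of_nonneg ha,
      show s a * (s a * ‖v a‖ ^ 2) = (s a * ‖v a‖) ^ 2 by ring, Real.sqrt_sq (by positivity)]
  have hf2 : ∫ a, f a ^ (2 : ℝ) ∂μ = ∫ a, s a ∂μ :=
    integral_congr_ae (hf_sq.mono fun a ha => by simp only [Real.rpow_two, ha])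
  have hg2 : ∫ a, g a ^ (2 : ℝ) ∂μ = ∫ a, s a * ‖v a‖ ^ 2 ∂μ :=
    integral_congr_ae (hg_sq.mono fun a ha => by simp only [Real.rpow_two, ha])
  rw [hfg, hf2, hg2, ← Real.sqrt_eq_rpow, ← Real.sqrt_eq_rpow] at holder
  calc ‖∫ a, s a • v a ∂μ‖ ^ 2
      ≤ (√(∫ a, s a ∂μ) * √(∫ a, s a * ‖v a‖ ^ 2 ∂μ)) ^ 2 :=
        pow_le_pow_left₀ (norm_nonneg _) ((norm_integral_le_integral_norm _).trans holder) 2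
    _ = (∫ a, s a ∂μ) * ∫ a, s a * ‖v a‖ ^ 2 ∂μ := by
        rw [mul_pow, Real.sq_sqrt (integral_nonneg_of_ae hs), Real.sq_sqrt
          (integral_nonneg_of_ae (hs.mono fun a ha => by positivity))]

theorem two_mul_inner_le_of_sq_norm_le {E : Type*} [NormedAddCommGroup E]
    [InnerProductSpace ℝ E] {a b : E} {r₁ e₁ r₂ e₂ : ℝ} (hr₁ : 0 ≤ r₁) (he₁ : 0 ≤ e₁)
    (hr₂ : 0 ≤ r₂) (he₂ : 0 ≤ e₂) (ha : ‖a‖ ^ 2 ≤ r₁ * e₁) (hb : ‖b‖ ^ 2 ≤ r₂ * e₂) :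
    2 * ⟪a, b⟫ ≤ e₁ * r₂ + r₁ * e₂ := by
  have hsq : (2 * (‖a‖ * ‖b‖)) ^ 2 ≤ (e₁ * r₂ + r₁ * e₂) ^ 2 := by
    nlinarith [mul_le_mul ha hb (sq_nonneg _) (mul_nonneg hr₁ he₁), sq_nonneg (e₁ * r₂ - r₁ * e₂)]
  have hnorm := (pow_le_pow_iff_left₀ (by positivity) (by positivity) two_ne_zero).1 hsq
  linarith [real_inner_le_norm a b]

theorem integrable_inner_mul_of_integrable_mul_norm_mul_norm {β E : Type*} [MeasurableSpace β]
    [NormedAddCommGroup E] [InnerProductSpace ℝ E] {π : Measure β} {u v : β → E} {w : β → ℝ}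
    (hu : AEStronglyMeasurable u π) (hv : AEStronglyMeasurable v π)
    (hw : AEStronglyMeasurable w π) (h : Integrable (fun p => w p * ‖u p‖ * ‖v p‖) π) :
    Integrable (fun p => ⟪u p, v p⟫ * w p) π := by
  refine h.norm.mono' ((hu.inner hv).mul hw) (ae_of_all _ fun p => ?_)
  rw [norm_mul, norm_mul, norm_mul, norm_norm, norm_norm, Real.norm_eq_abs ⟪u p, v p⟫]
  calc |⟪u p, v p⟫| * ‖w p‖ ≤ ‖u p‖ * ‖v p‖ * ‖w p‖ :=
        mul_le_mul_of_nonneg_right (abs_real_inner_le_norm _ _) (norm_nonneg _)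
    _ = ‖w p‖ * ‖u p‖ * ‖v p‖ := by ring

theorem integral_prod_self_nonneg_of_add_swap_nonneg {α : Type*} [MeasurableSpace α]
    {μ : Measure α} [SFinite μ] {f : α × α → ℝ} (hf : Integrable f (μ.prod μ))
    (h : ∀ p, 0 ≤ f p + f p.swap) : 0 ≤ ∫ p, f p ∂μ.prod μ := by
  have hsum : 0 ≤ ∫ p, (f p + f p.swap) ∂μ.prod μ := integral_nonneg h
  rw [integral_add hf (hf.swap : Integrable (fun p => f p.swap) _), integral_prod_swap] at hsum
  linarith

theorem stmt1_general (N : ℕ)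
    (Ω : Set (EuclideanSpace ℝ (Fin N)))
    (μ : Measure (EuclideanSpace ℝ (Fin N))) [IsFiniteMeasure μ]
    (ψ : EuclideanSpace ℝ (Fin N) → ℝ) (hψmeas : Measurable ψ)
    (hψnn : ∀ z, 0 ≤ ψ z) (hψsymm : ∀ z, ψ (-z) = ψ z)
    (ν : ProbabilityTheory.Kernel (EuclideanSpace ℝ (Fin N))
      (ℝ × EuclideanSpace ℝ (Fin N)))
    (hsupp : ∀ x, ∀ᵐ q ∂(ν x), 0 ≤ q.1)
    (hνint1 : ∀ x, Integrable (fun q : ℝ × EuclideanSpace ℝ (Fin N) => q.1) (ν x))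
    (hνint3 : ∀ x, Integrable (fun q : ℝ × EuclideanSpace ℝ (Fin N) => q.1 * ‖q.2‖ ^ 2) (ν x))
    (ρ : EuclideanSpace ℝ (Fin N) → ℝ)
    (m : EuclideanSpace ℝ (Fin N) → EuclideanSpace ℝ (Fin N))
    (e : EuclideanSpace ℝ (Fin N) → ℝ)
    (hρ : ∀ x, ρ x = ∫ q, q.1 ∂(ν x))
    (hm : ∀ x, m x = ∫ q, q.1 • q.2 ∂(ν x))
    (he : ∀ x, e x = ∫ q, q.1 * ‖q.2‖ ^ 2 ∂(ν x))
    (hint1 : IntegrableOn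
      (fun q : EuclideanSpace ℝ (Fin N) × EuclideanSpace ℝ (Fin N) =>
        ψ (q.1 - q.2) * e q.1 * ρ q.2) (Ω ×ˢ Ω) (μ.prod μ))
    (hint2 : IntegrableOn
      (fun q : EuclideanSpace ℝ (Fin N) × EuclideanSpace ℝ (Fin N) =>
        ψ (q.1 - q.2) * ‖m q.1‖ * ‖m q.2‖) (Ω ×ˢ Ω) (μ.prod μ)) :
    0 ≤ ∫ x in Ω, ∫ y in Ω, (e x * ρ y - (inner ℝ (m x) (m y) : ℝ)) * ψ (x - y) ∂μ ∂μ := by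
  have hρ_nonneg x : 0 ≤ ρ x := hρ x ▸ integral_nonneg_of_ae (hsupp x)
  have he_nonneg x : 0 ≤ e x :=
    he x ▸ integral_nonneg_of_ae ((hsupp x).mono fun q hq => by positivity)
  have hm_sq x : ‖m x‖ ^ 2 ≤ ρ x * e x := by
    rw [hρ, hm, he]
    exact sq_norm_integral_smul_le (hsupp x) (hνint1 x) (hνint3 x)
  have hm_meas : StronglyMeasurable m :=
    funext hm ▸ (measurable_fst.smul measurable_snd).stronglyMeasurable.integral_kernel
  have hψ_meas : AEStronglyMeasurable (fun p : EuclideanSpace ℝ (Fin N) × _ => ψ (p.1 - p.2))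
      ((μ.prod μ).restrict (Ω ×ˢ Ω)) :=
    (hψmeas.comp (measurable_fst.sub measurable_snd)).aestronglyMeasurable
  have hint : Integrable (fun p : EuclideanSpace ℝ (Fin N) × _ =>
      (e p.1 * ρ p.2 - ⟪m p.1, m p.2⟫) * ψ (p.1 - p.2)) ((μ.restrict Ω).prod (μ.restrict Ω)) := by
    rw [Measure.prod_restrict]
    refine (hint1.sub (integrable_inner_mul_of_integrable_mul_norm_mul_norm
      (hm_meas.comp_measurable measurable_fst).aestronglyMeasurable
      (hm_meas.comp_measurable measurable_snd).aestronglyMeasurable hψ_meas hint2)).congr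
      (ae_of_all _ fun p => by simp only [Pi.sub_apply, Function.comp_apply]; ring)
  rw [integral_integral hint]
  refine integral_prod_self_nonneg_of_add_swap_nonneg hint fun p => ?_
  have hinner := two_mul_inner_le_of_sq_norm_le (hρ_nonneg p.1) (he_nonneg p.1) (hρ_nonneg p.2)
    (he_nonneg p.2) (hm_sq p.1) (hm_sq p.2)
  rw [Prod.fst_swap, Prod.snd_swap, real_inner_comm (m p.1), ← neg_sub p.1, hψsymm]
  nlinarith [hψnn (p.1 - p.2)]

/-- For a finite measure on a measurable `Ω ⊆ ℝ^N`, a symmetric nonnegative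
measurable `ψ`, and a Markov kernel `x ↦ ν_x` of probability measures on `[0,∞) × ℝ^N`
with moments `ρ(x) = ∫ s dν_x`, `m(x) = ∫ sv dν_x`, `e(x) = ∫ s|v|² dν_x`, under the stated
integrability assumptions, `∫_Ω ∫_Ω (e(x)ρ(y) − m(x)·m(y)) ψ(x−y) dy dx ≥ 0`. -/
theorem stmt1 (N : ℕ) (hN : 1 ≤ N)
    (Ω : Set (EuclideanSpace ℝ (Fin N))) (hΩ : MeasurableSet Ω)
    (μ : Measure (EuclideanSpace ℝ (Fin N))) [IsFiniteMeasure μ]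
    (ψ : EuclideanSpace ℝ (Fin N) → ℝ) (hψmeas : Measurable ψ)
    (hψnn : ∀ z, 0 ≤ ψ z) (hψsymm : ∀ z, ψ (-z) = ψ z)
    (ν : ProbabilityTheory.Kernel (EuclideanSpace ℝ (Fin N))
      (ℝ × EuclideanSpace ℝ (Fin N)))
    [ProbabilityTheory.IsMarkovKernel ν]
    (hsupp : ∀ x, ∀ᵐ q ∂(ν x), 0 ≤ q.1)
    (hνint1 : ∀ x, Integrable (fun q : ℝ × EuclideanSpace ℝ (Fin N) => q.1) (ν x))
    (hνint2 : ∀ x, Integrable (fun q : ℝ × EuclideanSpace ℝ (Fin N) => q.1 • q.2) (ν x))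
    (hνint3 : ∀ x, Integrable (fun q : ℝ × EuclideanSpace ℝ (Fin N) => q.1 * ‖q.2‖ ^ 2) (ν x))
    (ρ : EuclideanSpace ℝ (Fin N) → ℝ)
    (m : EuclideanSpace ℝ (Fin N) → EuclideanSpace ℝ (Fin N))
    (e : EuclideanSpace ℝ (Fin N) → ℝ)
    (hρ : ∀ x, ρ x = ∫ q, q.1 ∂(ν x))
    (hm : ∀ x, m x = ∫ q, q.1 • q.2 ∂(ν x))
    (he : ∀ x, e x = ∫ q, q.1 * ‖q.2‖ ^ 2 ∂(ν x))
    (hint1 : IntegrableOn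
      (fun q : EuclideanSpace ℝ (Fin N) × EuclideanSpace ℝ (Fin N) =>
        ψ (q.1 - q.2) * e q.1 * ρ q.2) (Ω ×ˢ Ω) (μ.prod μ))
    (hint2 : IntegrableOn
      (fun q : EuclideanSpace ℝ (Fin N) × EuclideanSpace ℝ (Fin N) =>
        ψ (q.1 - q.2) * ‖m q.1‖ * ‖m q.2‖) (Ω ×ˢ Ω) (μ.prod μ))
    (hint3 : IntegrableOn
      (fun q : EuclideanSpace ℝ (Fin N) × EuclideanSpace ℝ (Fin N) =>
        ψ (q.1 - q.2) * ρ q.1 * e q.2) (Ω ×ˢ Ω) (μ.prod μ)) :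
    0 ≤ ∫ x in Ω, ∫ y in Ω, (e x * ρ y - (inner ℝ (m x) (m y) : ℝ)) * ψ (x - y) ∂μ ∂μ :=
  stmt1_general N Ω μ ψ hψmeas hψnn hψsymm ν hsupp hνint1 hνint3 ρ m e hρ hm he hint1 hint2
end

section
/- Let (X, μ) be a measure space, N ≥ 1, and let ρ : X → [0,∞) and u : X → ℝ^N be measurable. Assume ∫_{{ρ ≥ 1}} ρ · log ρ dμ ≤ C₁ and ∫_X ρ |u|² dμ ≤ C₂ for constants C₁, C₂ ≥ 0. Then for every k > 1, ∫_{{x : ρ(x)|u(x)| ≥ k}} ρ |u| dμ ≤ (log √k)^{−1/2} · C₁^{1/2} · C₂^{1/2} + C₂ / √k. -/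
open MeasureTheory

/-- The square of `ofReal (sqrt a)` is `ofReal a`, for all real `a`. -/
lemma ofReal_sqrt_rpow_two (a : ℝ) :
    ENNReal.ofReal (Real.sqrt a) ^ (2 : ℝ) = ENNReal.ofReal a := by
  rw [ENNReal.ofReal_rpow_of_nonneg (Real.sqrt_nonneg a) (by norm_num),
    Real.rpow_two]
  rcases le_or_gt 0 a with h | h
  · rw [Real.sq_sqrt h]
  · rw [Real.sqrt_eq_zero'.mpr h.le]
    simp [ENNReal.ofReal_eq_zero.mpr h.le]

/-- If `∫_{ρ ≥ 1} ρ log ρ dμ ≤ C₁` and `∫ ρ|u|² dμ ≤ C₂`, then for every `k > 1`,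
`∫_{ρ|u| ≥ k} ρ|u| dμ ≤ (log √k)^{-1/2} C₁^{1/2} C₂^{1/2} + C₂/√k`. -/
theorem stmt4 {X : Type*} [MeasurableSpace X] (μ : Measure X)
    (N : ℕ) (hN : 1 ≤ N)
    (ρ : X → ℝ) (hρmeas : Measurable ρ) (hρ0 : ∀ x, 0 ≤ ρ x)
    (u : X → EuclideanSpace ℝ (Fin N)) (humeas : Measurable u)
    (C₁ C₂ : ℝ) (hC₁ : 0 ≤ C₁) (hC₂ : 0 ≤ C₂)
    (h1 : ∫⁻ x in {x | 1 ≤ ρ x}, ENNReal.ofReal (ρ x * Real.log (ρ x)) ∂μ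
      ≤ ENNReal.ofReal C₁)
    (h2 : ∫⁻ x, ENNReal.ofReal (ρ x * ‖u x‖ ^ 2) ∂μ ≤ ENNReal.ofReal C₂) :
    ∀ k : ℝ, 1 < k →
      ∫⁻ x in {x | k ≤ ρ x * ‖u x‖}, ENNReal.ofReal (ρ x * ‖u x‖) ∂μ
        ≤ ENNReal.ofReal
          ((Real.sqrt (Real.log (Real.sqrt k)))⁻¹ * Real.sqrt C₁ * Real.sqrt C₂
            + C₂ / Real.sqrt k) := by
  intro k hk
  have hk0 : (0:ℝ) < k := lt_trans one_pos hk
  set L : ℝ := Real.sqrt k with hLdef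
  have hL1 : 1 < L := by
    have := Real.sqrt_lt_sqrt (by norm_num) hk
    simpa using this
  have hL0 : 0 < L := lt_trans one_pos hL1
  have hLL : L * L = k := Real.mul_self_sqrt hk0.le
  have hlogL : 0 < Real.log L := Real.log_pos hL1
  set A : Set X := {x | L ≤ ρ x} with hAdef
  set B : Set X := {x | L ≤ ‖u x‖} with hBdef
  -- measurable functions
  have hf : Measurable fun x => ENNReal.ofReal (Real.sqrt (ρ x * Real.log (ρ x))) :=
    ((hρmeas.mul (Real.measurable_log.comp hρmeas)).sqrt).ennreal_ofReal
  have hnorm : Measurable fun x => ‖u x‖ := humeas.norm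
  have hg : Measurable fun x => ENNReal.ofReal (Real.sqrt (ρ x * ‖u x‖ ^ 2)) :=
    ((hρmeas.mul (hnorm.pow_const 2)).sqrt).ennreal_ofReal
  -- split the set
  have hsub : {x | k ≤ ρ x * ‖u x‖} ⊆ A ∪ B := by
    intro x hx
    by_contra hc
    simp only [Set.mem_union, hAdef, hBdef, Set.mem_setOf_eq, not_or, not_le] at hc
    rw [Set.mem_setOf_eq] at hx
    have h1x : ρ x < L := hc.1
    have h2x : ‖u x‖ < L := hc.2
    have : ρ x * ‖u x‖ < L * L :=
      mul_lt_mul'' h1x h2x (hρ0 x) (norm_nonneg _)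
    rw [hLL] at this
    linarith
  have hsplit : ∫⁻ x in {x | k ≤ ρ x * ‖u x‖}, ENNReal.ofReal (ρ x * ‖u x‖) ∂μ
      ≤ (∫⁻ x in A, ENNReal.ofReal (ρ x * ‖u x‖) ∂μ)
        + ∫⁻ x in B, ENNReal.ofReal (ρ x * ‖u x‖) ∂μ :=
    le_trans (lintegral_mono_set hsub) (lintegral_union_le _ _ _)
  -- Bound on B
  have hB : ∫⁻ x in B, ENNReal.ofReal (ρ x * ‖u x‖) ∂μ ≤ ENNReal.ofReal (C₂ / L) := by
    have hstep : ∫⁻ x in B, ENNReal.ofReal (ρ x * ‖u x‖) ∂μ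
        ≤ ∫⁻ x in B, ENNReal.ofReal (ρ x * ‖u x‖ ^ 2) * ENNReal.ofReal L⁻¹ ∂μ := by
      refine setLIntegral_mono ((((hρmeas.mul (hnorm.pow_const 2)).ennreal_ofReal).mul_const _))
        fun x hx => ?_
      rw [hBdef, Set.mem_setOf_eq] at hx
      rw [← ENNReal.ofReal_mul (mul_nonneg (hρ0 x) (sq_nonneg _))]
      apply ENNReal.ofReal_le_ofReal
      have h0u : 0 < ‖u x‖ := lt_of_lt_of_le hL0 hx
      rw [mul_comm (ρ x * ‖u x‖ ^ 2) L⁻¹, ← div_eq_inv_mul, le_div_iff₀ hL0]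
      calc ρ x * ‖u x‖ * L ≤ ρ x * ‖u x‖ * ‖u x‖ := by
            apply mul_le_mul_of_nonneg_left hx (mul_nonneg (hρ0 x) (norm_nonneg _))
        _ = ρ x * ‖u x‖ ^ 2 := by ring
    refine hstep.trans ?_
    rw [lintegral_mul_const (f := fun x => ENNReal.ofReal (ρ x * ‖u x‖ ^ 2)) _ ((hρmeas.mul (hnorm.pow_const 2)).ennreal_ofReal)]
    calc (∫⁻ x in B, ENNReal.ofReal (ρ x * ‖u x‖ ^ 2) ∂μ) * ENNReal.ofReal L⁻¹
        ≤ ENNReal.ofReal C₂ * ENNReal.ofReal L⁻¹ := by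
          apply mul_le_mul_left (le_trans (setLIntegral_le_lintegral _ _) h2)
      _ = ENNReal.ofReal (C₂ / L) := by
          rw [← ENNReal.ofReal_mul hC₂, div_eq_mul_inv]
  -- Bound on A
  have hA : ∫⁻ x in A, ENNReal.ofReal (ρ x * ‖u x‖) ∂μ
      ≤ ENNReal.ofReal ((Real.sqrt (Real.log L))⁻¹ * Real.sqrt C₁ * Real.sqrt C₂) := by
    have hstep : ∫⁻ x in A, ENNReal.ofReal (ρ x * ‖u x‖) ∂μ
        ≤ ∫⁻ x in A, ENNReal.ofReal (Real.sqrt (Real.log L))⁻¹ *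
            ((fun x => ENNReal.ofReal (Real.sqrt (ρ x * Real.log (ρ x)))) x *
             (fun x => ENNReal.ofReal (Real.sqrt (ρ x * ‖u x‖ ^ 2))) x) ∂μ := by
      refine setLIntegral_mono (measurable_const.mul (hf.mul hg)) fun x hx => ?_
      rw [hAdef, Set.mem_setOf_eq] at hx
      have hρx : 0 < ρ x := lt_of_lt_of_le hL0 hx
      have hlogx : Real.log L ≤ Real.log (ρ x) := Real.log_le_log hL0 hx
      have hlogx0 : 0 < Real.log (ρ x) := lt_of_lt_of_le hlogL hlogx
      rw [← ENNReal.ofReal_mul (Real.sqrt_nonneg _),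
        ← ENNReal.ofReal_mul (inv_nonneg.mpr (Real.sqrt_nonneg _))]
      apply ENNReal.ofReal_le_ofReal
      have hsq1 : Real.sqrt (ρ x * Real.log (ρ x)) = Real.sqrt (ρ x) * Real.sqrt (Real.log (ρ x)) :=
        Real.sqrt_mul hρx.le _
      have hsq2 : Real.sqrt (ρ x * ‖u x‖ ^ 2) = Real.sqrt (ρ x) * ‖u x‖ := by
        rw [Real.sqrt_mul hρx.le, Real.sqrt_sq (norm_nonneg _)]
      rw [hsq1, hsq2]
      have hss : Real.sqrt (ρ x) * Real.sqrt (ρ x) = ρ x := Real.mul_self_sqrt hρx.le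
      have hmono : Real.sqrt (Real.log L) ≤ Real.sqrt (Real.log (ρ x)) :=
        Real.sqrt_le_sqrt hlogx
      have hsl : 0 < Real.sqrt (Real.log L) := Real.sqrt_pos.mpr hlogL
      have key : (1:ℝ) ≤ (Real.sqrt (Real.log L))⁻¹ * Real.sqrt (Real.log (ρ x)) := by
        rw [← div_eq_inv_mul, le_div_iff₀ hsl, one_mul]
        exact hmono
      calc ρ x * ‖u x‖ = 1 * (ρ x * ‖u x‖) := by ring
        _ ≤ ((Real.sqrt (Real.log L))⁻¹ * Real.sqrt (Real.log (ρ x))) * (ρ x * ‖u x‖) := by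
            apply mul_le_mul_of_nonneg_right key (mul_nonneg (hρ0 x) (norm_nonneg _))
        _ = (Real.sqrt (Real.log L))⁻¹ *
              (Real.sqrt (ρ x) * Real.sqrt (Real.log (ρ x)) * (Real.sqrt (ρ x) * ‖u x‖)) := by
            rw [mul_assoc]
            congr 1
            linear_combination (-(Real.sqrt (Real.log (ρ x)) * ‖u x‖)) * hss
    refine hstep.trans ?_
    rw [lintegral_const_mul' _ _ ENNReal.ofReal_ne_top]
    have hCS := ENNReal.lintegral_mul_le_Lp_mul_Lq (μ.restrict A)
      ((Real.holderConjugate_iff (p := 2) (q := 2)).mpr ⟨by norm_num, by norm_num⟩)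
      hf.aemeasurable hg.aemeasurable
    have hAmeas : MeasurableSet A := measurableSet_le measurable_const hρmeas
    have hAsub : A ⊆ {x | 1 ≤ ρ x} := fun x hx => le_trans hL1.le hx
    have hI1 : ∫⁻ x in A, (fun x => ENNReal.ofReal (Real.sqrt (ρ x * Real.log (ρ x)))) x ^ (2:ℝ) ∂μ
        ≤ ENNReal.ofReal C₁ := by
      simp only [ofReal_sqrt_rpow_two]
      exact le_trans (lintegral_mono_set hAsub) h1
    have hI2 : ∫⁻ x in A, (fun x => ENNReal.ofReal (Real.sqrt (ρ x * ‖u x‖ ^ 2))) x ^ (2:ℝ) ∂μ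
        ≤ ENNReal.ofReal C₂ := by
      simp only [ofReal_sqrt_rpow_two]
      exact le_trans (setLIntegral_le_lintegral _ _) h2
    have hprod : (∫⁻ x in A, ((fun x => ENNReal.ofReal (Real.sqrt (ρ x * Real.log (ρ x)))) *
          (fun x => ENNReal.ofReal (Real.sqrt (ρ x * ‖u x‖ ^ 2)))) x ∂μ)
        ≤ ENNReal.ofReal (Real.sqrt C₁) * ENNReal.ofReal (Real.sqrt C₂) := by
      refine hCS.trans ?_
      have e1 : (ENNReal.ofReal C₁) ^ ((1:ℝ)/2) = ENNReal.ofReal (Real.sqrt C₁) := by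
        rw [ENNReal.ofReal_rpow_of_nonneg hC₁ (by norm_num), Real.sqrt_eq_rpow]
      have e2 : (ENNReal.ofReal C₂) ^ ((1:ℝ)/2) = ENNReal.ofReal (Real.sqrt C₂) := by
        rw [ENNReal.ofReal_rpow_of_nonneg hC₂ (by norm_num), Real.sqrt_eq_rpow]
      rw [← e1, ← e2]
      exact mul_le_mul' (ENNReal.rpow_le_rpow hI1 (by norm_num))
        (ENNReal.rpow_le_rpow hI2 (by norm_num))
    calc ENNReal.ofReal (Real.sqrt (Real.log L))⁻¹ *
          ∫⁻ x in A, (fun x => ENNReal.ofReal (Real.sqrt (ρ x * Real.log (ρ x)))) x *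
            (fun x => ENNReal.ofReal (Real.sqrt (ρ x * ‖u x‖ ^ 2))) x ∂μ
        ≤ ENNReal.ofReal (Real.sqrt (Real.log L))⁻¹ *
            (ENNReal.ofReal (Real.sqrt C₁) * ENNReal.ofReal (Real.sqrt C₂)) :=
          mul_le_mul_right hprod _
      _ = ENNReal.ofReal ((Real.sqrt (Real.log L))⁻¹ * Real.sqrt C₁ * Real.sqrt C₂) := by
          rw [← ENNReal.ofReal_mul (by positivity), ← ENNReal.ofReal_mul (by positivity),
            mul_assoc]
  calc ∫⁻ x in {x | k ≤ ρ x * ‖u x‖}, ENNReal.ofReal (ρ x * ‖u x‖) ∂μ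
      ≤ (∫⁻ x in A, ENNReal.ofReal (ρ x * ‖u x‖) ∂μ)
        + ∫⁻ x in B, ENNReal.ofReal (ρ x * ‖u x‖) ∂μ := hsplit
    _ ≤ ENNReal.ofReal ((Real.sqrt (Real.log L))⁻¹ * Real.sqrt C₁ * Real.sqrt C₂)
        + ENNReal.ofReal (C₂ / L) := add_le_add hA hB
    _ = ENNReal.ofReal ((Real.sqrt (Real.log (Real.sqrt k)))⁻¹ * Real.sqrt C₁ * Real.sqrt C₂
          + C₂ / Real.sqrt k) := by
        rw [← ENNReal.ofReal_add (by positivity) (by positivity)]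
end

section
/- Let N ≥ 1, z₀ ≥ 0, and let H : [0,∞) → ℝ be continuously differentiable with 0 ≤ H(z) for all z and H′(z) ≥ 0 for all z ≥ z₀. Then there exists a constant c > 0 such that for all s ≥ 0 and all v, U ∈ ℝ^N: s (v − U) · ( (1 − H(|v|²)) v − (1 − H(|U|²)) U ) ≤ c · s |v − U|². -/
/-! Split `H = h₁ + h₂` with `h₁ z = H (min z z₀) - H z₀`, Lipschitz on `[0, ∞)` and vanishing
beyond `z₀`, and `h₂ z = H (max z z₀)`, nonnegative and nondecreasing. The identity
`⟪v - U, α v - β U⟫ = (α + β)/2 ‖v - U‖² + (α - β)(‖v‖² - ‖U‖²)/2` shows that `v ↦ h₂ (‖v‖²) v`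
is monotone, so its contribution can be dropped. The map `v ↦ h₁ (‖v‖²) v` is Lipschitz, because
`h₁` is bounded and its increments are only felt inside the ball of radius `√z₀`; Cauchy–Schwarz
then bounds its contribution by a multiple of `‖v - U‖²`. -/

open Set
open scoped NNReal RealInnerProductSpace

section Radial

variable {E : Type*}

theorem inner_sub_smul_sub_smul_eq [NormedAddCommGroup E] [InnerProductSpace ℝ E]
    (α β : ℝ) (v U : E) :
    ⟪v - U, α • v - β • U⟫ = (α + β) / 2 * ‖v - U‖ ^ 2 + (α - β) * (‖v‖ ^ 2 - ‖U‖ ^ 2) / 2 := by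
  rw [norm_sub_sq_real, inner_sub_right, inner_smul_right, inner_smul_right, inner_sub_left,
    inner_sub_left, real_inner_self_eq_norm_sq, real_inner_self_eq_norm_sq, real_inner_comm U v]
  ring

theorem inner_sub_smul_sub_smul_nonneg [NormedAddCommGroup E] [InnerProductSpace ℝ E]
    {g : ℝ → ℝ} (hg : MonotoneOn g (Ici 0)) (hg₀ : ∀ z, 0 ≤ z → 0 ≤ g z) (v U : E) :
    0 ≤ ⟪v - U, g (‖v‖ ^ 2) • v - g (‖U‖ ^ 2) • U⟫ := by
  have hv : ‖v‖ ^ 2 ∈ Ici (0 : ℝ) := mem_Ici.2 (sq_nonneg _)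
  have hU : ‖U‖ ^ 2 ∈ Ici (0 : ℝ) := mem_Ici.2 (sq_nonneg _)
  have hmonovary := (hg.monovaryOn monotoneOn_id).sub_mul_sub_nonneg hU hv
  rw [inner_sub_smul_sub_smul_eq]
  exact add_nonneg (mul_nonneg (by linarith [hg₀ _ hv, hg₀ _ hU]) (sq_nonneg _))
    (by simpa using div_nonneg hmonovary zero_le_two)

theorem LipschitzOnWith.abs_le_of_eq_zero {h : ℝ → ℝ} {K R : ℝ≥0}
    (hh : LipschitzOnWith K h (Ici 0)) (hR : ∀ z : ℝ, R ≤ z → h z = 0) {z : ℝ} (hz : 0 ≤ z) :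
    |h z| ≤ K * R := by
  rcases le_total (R : ℝ) z with hRz | hzR
  · rw [hR z hRz, abs_zero]; positivity
  · calc |h z| = dist (h z) (h R) := by rw [hR R le_rfl, Real.dist_eq, sub_zero]
      _ ≤ K * dist z R := hh.dist_le_mul z hz R R.2
      _ ≤ K * R := by
        rw [Real.dist_eq, abs_of_nonpos (by linarith)]
        gcongr; linarith

theorem LipschitzOnWith.abs_sub_sq_mul_le_of_eq_zero {h : ℝ → ℝ} {K R : ℝ≥0}
    (hh : LipschitzOnWith K h (Ici 0)) (hR : ∀ z : ℝ, R ≤ z → h z = 0) {r t : ℝ}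
    (ht : 0 ≤ t) (htr : t ≤ r) :
    |h (r ^ 2) - h (t ^ 2)| * t ≤ 2 * K * R * (r - t) := by
  have hr : 0 ≤ r := ht.trans htr
  have hK := K.coe_nonneg
  rcases le_total (R : ℝ) (t ^ 2) with hRt | htR
  · rw [hR _ hRt, hR _ (hRt.trans (by gcongr)), sub_zero, abs_zero, zero_mul]
    exact mul_nonneg (by positivity) (sub_nonneg.2 htr)
  rcases le_total (r ^ 2) R with hrR | hRr
  · have hlip : |h (r ^ 2) - h (t ^ 2)| ≤ K * (r ^ 2 - t ^ 2) := by
      rw [← Real.dist_eq, ← abs_of_nonneg (by nlinarith : 0 ≤ r ^ 2 - t ^ 2), ← Real.dist_eq]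
      exact hh.dist_le_mul _ (sq_nonneg r) _ (sq_nonneg t)
    calc |h (r ^ 2) - h (t ^ 2)| * t ≤ K * (r ^ 2 - t ^ 2) * t := by gcongr
      _ ≤ 2 * K * R * (r - t) := by
        have hsum : (r + t) * t ≤ 2 * R := by nlinarith [sq_nonneg (r - t)]
        have key : (r ^ 2 - t ^ 2) * t ≤ 2 * R * (r - t) := by
          nlinarith [mul_le_mul_of_nonneg_left hsum (sub_nonneg.2 htr)]
        nlinarith [mul_le_mul_of_nonneg_left key hK]
  · have hlip : |h (r ^ 2) - h (t ^ 2)| ≤ K * (R - t ^ 2) := by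
      rw [hR _ hRr, ← hR R le_rfl, ← Real.dist_eq, ← abs_of_nonneg (sub_nonneg.2 htR),
        ← Real.dist_eq]
      exact hh.dist_le_mul _ R.2 _ (sq_nonneg t)
    calc |h (r ^ 2) - h (t ^ 2)| * t ≤ K * (R - t ^ 2) * t := by gcongr
      _ ≤ 2 * K * R * (r - t) := by
        -- `2Rr - 3Rt + t³` is affine in `R`, so it suffices to check `R = t²` and `R = r²`.
        have key : (R - t ^ 2) * t ≤ 2 * R * (r - t) := by
          rcases le_total (3 * t) (2 * r) with h3 | h3
          · nlinarith [mul_nonneg (sub_nonneg.2 h3) (sub_nonneg.2 htR),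
              mul_nonneg (sq_nonneg t) (sub_nonneg.2 htr)]
          · nlinarith [mul_nonneg (sub_nonneg.2 h3) (sub_nonneg.2 hRr),
              mul_nonneg (sq_nonneg (r - t)) (add_nonneg hr ht)]
        nlinarith [mul_le_mul_of_nonneg_left key hK]

theorem LipschitzOnWith.lipschitzWith_smul_norm_sq [SeminormedAddCommGroup E] [NormedSpace ℝ E]
    {h : ℝ → ℝ} {K R : ℝ≥0} (hh : LipschitzOnWith K h (Ici 0)) (hR : ∀ z : ℝ, R ≤ z → h z = 0) :
    LipschitzWith (3 * K * R) fun v : E => h (‖v‖ ^ 2) • v := by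
  refine LipschitzWith.of_dist_le_mul fun v U => ?_
  wlog htr : ‖U‖ ≤ ‖v‖ generalizing v U
  · rw [dist_comm, dist_comm v]
    exact this U v (le_of_not_ge htr)
  rw [dist_eq_norm, dist_eq_norm]
  have hdecomp : h (‖v‖ ^ 2) • v - h (‖U‖ ^ 2) • U
      = h (‖v‖ ^ 2) • (v - U) + (h (‖v‖ ^ 2) - h (‖U‖ ^ 2)) • U := by
    rw [smul_sub, sub_smul]; abel
  calc ‖h (‖v‖ ^ 2) • v - h (‖U‖ ^ 2) • U‖
      ≤ |h (‖v‖ ^ 2)| * ‖v - U‖ + |h (‖v‖ ^ 2) - h (‖U‖ ^ 2)| * ‖U‖ := by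
        rw [hdecomp, ← Real.norm_eq_abs, ← Real.norm_eq_abs, ← norm_smul, ← norm_smul]
        exact norm_add_le _ _
    _ ≤ K * R * ‖v - U‖ + 2 * K * R * (‖v‖ - ‖U‖) :=
        add_le_add
          (mul_le_mul_of_nonneg_right (hh.abs_le_of_eq_zero hR (sq_nonneg _))
            (norm_nonneg _))
          (hh.abs_sub_sq_mul_le_of_eq_zero hR (norm_nonneg _) htr)
    _ ≤ ↑(3 * K * R) * ‖v - U‖ := by
        have hKR : (0 : ℝ) ≤ K * R := by positivity
        have := mul_le_mul_of_nonneg_left (norm_sub_norm_le v U) hKR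
        push_cast
        linarith

theorem inner_sub_one_sub_smul_le [NormedAddCommGroup E] [InnerProductSpace ℝ E]
    {h₁ h₂ : ℝ → ℝ} {L : ℝ≥0} (h₁_lip : LipschitzWith L fun v : E => h₁ (‖v‖ ^ 2) • v)
    (h₂_mono : MonotoneOn h₂ (Ici 0)) (h₂_nonneg : ∀ z, 0 ≤ z → 0 ≤ h₂ z) (v U : E) :
    ⟪v - U, (1 - (h₁ + h₂) (‖v‖ ^ 2)) • v - (1 - (h₁ + h₂) (‖U‖ ^ 2)) • U⟫
      ≤ (1 + L) * ‖v - U‖ ^ 2 := by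
  have hsplit : ⟪v - U, (1 - (h₁ + h₂) (‖v‖ ^ 2)) • v - (1 - (h₁ + h₂) (‖U‖ ^ 2)) • U⟫
      = ‖v - U‖ ^ 2 - ⟪v - U, h₁ (‖v‖ ^ 2) • v - h₁ (‖U‖ ^ 2) • U⟫
        - ⟪v - U, h₂ (‖v‖ ^ 2) • v - h₂ (‖U‖ ^ 2) • U⟫ := by
    rw [← real_inner_self_eq_norm_sq (v - U)]
    simp only [Pi.add_apply, inner_sub_right, inner_smul_right]
    ring
  have hlip : -⟪v - U, h₁ (‖v‖ ^ 2) • v - h₁ (‖U‖ ^ 2) • U⟫ ≤ L * ‖v - U‖ ^ 2 :=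
    calc _ ≤ ‖v - U‖ * ‖h₁ (‖v‖ ^ 2) • v - h₁ (‖U‖ ^ 2) • U‖ :=
          (neg_le_abs _).trans (abs_real_inner_le_norm _ _)
      _ ≤ ‖v - U‖ * (L * ‖v - U‖) := by
          gcongr
          simpa only [dist_eq_norm] using h₁_lip.dist_le_mul v U
      _ = L * ‖v - U‖ ^ 2 := by ring
  have hmono := inner_sub_smul_sub_smul_nonneg h₂_mono h₂_nonneg v U
  rw [hsplit]
  linarith

end Radial

theorem monotoneOn_Ici_of_derivWithin_nonneg {H : ℝ → ℝ} {a b : ℝ} (hab : a ≤ b)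
    (hH : DifferentiableOn ℝ H (Ici a)) (hH' : ∀ z, b < z → 0 ≤ derivWithin H (Ici a) z) :
    MonotoneOn H (Ici b) := by
  refine monotoneOn_of_hasDerivWithinAt_nonneg (f' := derivWithin H (Ici a)) (convex_Ici b)
    (hH.continuousOn.mono (Ici_subset_Ici.2 hab)) (fun z hz => ?_) fun z hz => ?_
  · rw [interior_Ici] at hz ⊢
    exact (hH z (hab.trans hz.le)).hasDerivWithinAt.mono fun x hx => hab.trans (le_of_lt hx)
  · rw [interior_Ici] at hz
    exact hH' z hz

theorem LipschitzOnWith.comp_min_sub_const {H : ℝ → ℝ} {K : ℝ≥0} {z₀ : ℝ} (hz₀ : 0 ≤ z₀)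
    (hK : LipschitzOnWith K H (Icc 0 z₀)) :
    LipschitzOnWith K (fun z => H (min z z₀) - H z₀) (Ici 0) :=
  .of_dist_le_mul fun x hx y hy => by
    rw [dist_sub_right]
    calc dist (H (min x z₀)) (H (min y z₀)) ≤ K * dist (min x z₀) (min y z₀) :=
          hK.dist_le_mul _ ⟨le_min hx hz₀, min_le_right _ _⟩ _ ⟨le_min hy hz₀, min_le_right _ _⟩
      _ ≤ K * dist x y := by
          gcongr
          simpa using (LipschitzWith.id.min_const z₀).dist_le_mul x y

theorem stmt9_general (N : ℕ) (z₀ : ℝ) (hz₀ : 0 ≤ z₀) (H : ℝ → ℝ)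
    (hH : ContDiffOn ℝ 1 H (Set.Ici 0))
    (hHnn : ∀ z, 0 ≤ z → 0 ≤ H z)
    (hH' : ∀ z, z₀ ≤ z → 0 ≤ derivWithin H (Set.Ici 0) z) :
    ∃ c : ℝ, 0 < c ∧ ∀ s : ℝ, 0 ≤ s → ∀ v U : EuclideanSpace ℝ (Fin N),
      s * (inner ℝ (v - U) ((1 - H (‖v‖ ^ 2)) • v - (1 - H (‖U‖ ^ 2)) • U) : ℝ)
        ≤ c * (s * ‖v - U‖ ^ 2) := by
  obtain ⟨K, hK⟩ := (hH.mono Icc_subset_Ici_self).exists_lipschitzOnWith one_ne_zero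
    (convex_Icc 0 z₀) isCompact_Icc
  have hmono : MonotoneOn H (Ici z₀) :=
    monotoneOn_Ici_of_derivWithin_nonneg hz₀ (hH.differentiableOn one_ne_zero)
      fun z hz => hH' z hz.le
  set h₁ : ℝ → ℝ := fun z => H (min z z₀) - H z₀
  set h₂ : ℝ → ℝ := fun z => H (max z z₀)
  have hsplit : H = h₁ + h₂ := by
    funext z
    rcases le_total z z₀ with hz | hz <;> simp [h₁, h₂, hz]
  have h₁_lip : LipschitzOnWith K h₁ (Ici 0) := hK.comp_min_sub_const hz₀
  set R : ℝ≥0 := ⟨z₀, hz₀⟩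
  have h₁_zero : ∀ z : ℝ, R ≤ z → h₁ z = 0 := fun z hz => by
    simp [h₁, min_eq_right (show z₀ ≤ z from hz)]
  have h₂_mono : MonotoneOn h₂ (Ici 0) := fun x _ y _ hxy =>
    hmono (mem_Ici.2 (le_max_right x z₀)) (mem_Ici.2 (le_max_right y z₀))
      (max_le_max_right z₀ hxy)
  have h₂_nonneg : ∀ z, 0 ≤ z → 0 ≤ h₂ z := fun z _ => hHnn _ (hz₀.trans (le_max_right _ _))
  refine ⟨1 + (3 * K * R : ℝ≥0), by positivity, fun s hs v U => ?_⟩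
  rw [mul_left_comm]
  refine mul_le_mul_of_nonneg_left ?_ hs
  rw [hsplit]
  simpa using inner_sub_one_sub_smul_le (h₁_lip.lipschitzWith_smul_norm_sq h₁_zero)
    h₂_mono h₂_nonneg v U

/-- If `H : [0,∞) → ℝ` is C¹, nonnegative, with `H′(z) ≥ 0` for `z ≥ z₀`, then
there is `c > 0` such that for all `s ≥ 0` and `v, U ∈ ℝ^N`,
`s (v−U)·((1−H(|v|²))v − (1−H(|U|²))U) ≤ c s |v−U|²`. -/
theorem stmt9 (N : ℕ) (hN : 1 ≤ N) (z₀ : ℝ) (hz₀ : 0 ≤ z₀) (H : ℝ → ℝ)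
    (hH : ContDiffOn ℝ 1 H (Set.Ici 0))
    (hHnn : ∀ z, 0 ≤ z → 0 ≤ H z)
    (hH' : ∀ z, z₀ ≤ z → 0 ≤ derivWithin H (Set.Ici 0) z) :
    ∃ c : ℝ, 0 < c ∧ ∀ s : ℝ, 0 ≤ s → ∀ v U : EuclideanSpace ℝ (Fin N),
      s * (inner ℝ (v - U) ((1 - H (‖v‖ ^ 2)) • v - (1 - H (‖U‖ ^ 2)) • U) : ℝ)
        ≤ c * (s * ‖v - U‖ ^ 2) :=
  stmt9_general N z₀ hz₀ H hH hHnn hH'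
end

section
/- Let p : (0,∞) → ℝ be continuously differentiable with p(z) ≥ 0 for all z > 0, and suppose there exist z₀ ≥ 1 and α > 0 with p′(z) ≥ α for all z ≥ z₀. Then there exist constants c₁, c₂ > 0 such that ρ log ρ ≤ c₁ P(ρ) + c₂ ρ for all ρ ≥ 1. -/
open MeasureTheory intervalIntegral

/-- If `p : (0,∞) → ℝ` is C¹, nonnegative, with `p′(z) ≥ α > 0` for `z ≥ z₀`
(`z₀ ≥ 1`), and `P(ρ) = ρ ∫₁^ρ p(z)/z² dz`, then there are `c₁, c₂ > 0` with
`ρ log ρ ≤ c₁ P(ρ) + c₂ ρ` for all `ρ ≥ 1`. -/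
theorem stmt11 (p P : ℝ → ℝ) (hp : ContDiffOn ℝ 1 p (Set.Ioi 0))
    (hp0 : ∀ z : ℝ, 0 < z → 0 ≤ p z)
    (z₀ : ℝ) (hz₀ : 1 ≤ z₀) (α : ℝ) (hα : 0 < α)
    (hp' : ∀ z : ℝ, z₀ ≤ z → α ≤ deriv p z)
    (hP : ∀ ρ : ℝ, P ρ = ρ * ∫ z in (1 : ℝ)..ρ, p z / z ^ 2) :
    ∃ c₁ : ℝ, 0 < c₁ ∧ ∃ c₂ : ℝ, 0 < c₂ ∧
      ∀ ρ : ℝ, 1 ≤ ρ → ρ * Real.log ρ ≤ c₁ * P ρ + c₂ * ρ := by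
  have h2z₀ : (1:ℝ) < 2 * z₀ := by linarith
  have hpc : ContinuousOn p (Set.Ioi 0) := hp.continuousOn
  -- integrability of the integrand on positive intervals
  have hInt : ∀ a b : ℝ, 0 < a → a ≤ b →
      IntervalIntegrable (fun z => p z / z ^ 2) volume a b := by
    intro a b ha hab
    have hsub : Set.uIcc a b ⊆ Set.Ioi 0 := by
      rw [Set.uIcc_of_le hab]
      intro x hx
      exact lt_of_lt_of_le ha hx.1
    apply ContinuousOn.intervalIntegrable
    apply ContinuousOn.div (hpc.mono hsub)
    · exact (continuous_pow 2).continuousOn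
    · intro x hx
      have : 0 < x := hsub hx
      positivity
  -- the integral is nonneg
  have hIntNonneg : ∀ ρ : ℝ, 1 ≤ ρ → 0 ≤ ∫ z in (1:ℝ)..ρ, p z / z ^ 2 := by
    intro ρ hρ
    apply intervalIntegral.integral_nonneg hρ
    intro u hu
    have hu0 : 0 < u := lt_of_lt_of_le one_pos hu.1
    have := hp0 u hu0
    positivity
  -- linear lower bound for p
  have hplin : ∀ z : ℝ, 2 * z₀ ≤ z → α * z / 2 ≤ p z := by
    intro z hz
    have hz₀z : z₀ ≤ z := by linarith
    have hdiff : DifferentiableOn ℝ p (interior (Set.Ici z₀)) := by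
      intro x hx
      rw [interior_Ici] at hx
      have hx0 : x ∈ Set.Ioi (0:ℝ) := by
        simp only [Set.mem_Ioi] at hx ⊢; linarith [hx]
      exact ((hp.differentiableOn one_ne_zero).differentiableAt
        (Ioi_mem_nhds (Set.mem_Ioi.mp hx0))).differentiableWithinAt
    have hcont : ContinuousOn p (Set.Ici z₀) := by
      apply hpc.mono
      intro x hx
      exact lt_of_lt_of_le (by linarith : (0:ℝ) < z₀) hx
    have hge : ∀ x ∈ interior (Set.Ici z₀), α ≤ deriv p x := by
      intro x hx
      rw [interior_Ici] at hx
      exact hp' x (le_of_lt hx)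
    have key := (convex_Ici z₀).mul_sub_le_image_sub_of_le_deriv hcont hdiff hge
      z₀ Set.self_mem_Ici z (Set.mem_Ici.mpr hz₀z) hz₀z
    have hpz₀ : 0 ≤ p z₀ := hp0 z₀ (by linarith)
    nlinarith
  refine ⟨2 / α, by positivity, Real.log (2 * z₀) + 1,
    by have := Real.log_nonneg (le_of_lt h2z₀); linarith, ?_⟩
  intro ρ hρ
  have hρ0 : (0:ℝ) < ρ := lt_of_lt_of_le one_pos hρ
  have hPρ : 0 ≤ P ρ := by
    rw [hP ρ]
    exact mul_nonneg (le_of_lt hρ0) (hIntNonneg ρ hρ)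
  by_cases hcase : ρ ≤ 2 * z₀
  · have hlog : Real.log ρ ≤ Real.log (2 * z₀) := Real.log_le_log hρ0 hcase
    have h1 : ρ * Real.log ρ ≤ (Real.log (2 * z₀) + 1) * ρ := by nlinarith
    have h2 : 0 ≤ 2 / α * P ρ := by positivity
    linarith
  · push_neg at hcase
    have hcase' : 2 * z₀ ≤ ρ := le_of_lt hcase
    -- split the integral
    have hsplit : (∫ z in (1:ℝ)..(2*z₀), p z / z ^ 2) + ∫ z in (2*z₀)..ρ, p z / z ^ 2
        = ∫ z in (1:ℝ)..ρ, p z / z ^ 2 :=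
      intervalIntegral.integral_add_adjacent_intervals
        (hInt 1 (2*z₀) one_pos (le_of_lt h2z₀)) (hInt (2*z₀) ρ (by linarith) hcase')
    have hfirst : 0 ≤ ∫ z in (1:ℝ)..(2*z₀), p z / z ^ 2 := by
      apply intervalIntegral.integral_nonneg (le_of_lt h2z₀)
      intro u hu
      have hu0 : 0 < u := lt_of_lt_of_le one_pos hu.1
      have := hp0 u hu0
      positivity
    have hmono : (∫ z in (2*z₀)..ρ, α / 2 * z⁻¹) ≤ ∫ z in (2*z₀)..ρ, p z / z ^ 2 := by
      apply intervalIntegral.integral_mono_on hcase'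
      · apply ContinuousOn.intervalIntegrable
        apply ContinuousOn.mul continuousOn_const
        apply ContinuousOn.inv₀ continuousOn_id
        intro x hx
        rw [Set.uIcc_of_le hcase'] at hx
        have : (0:ℝ) < x := lt_of_lt_of_le (by linarith) hx.1
        exact ne_of_gt this
      · exact hInt (2*z₀) ρ (by linarith) hcase'
      · intro x hx
        have hx0 : 0 < x := lt_of_lt_of_le (by linarith) hx.1
        have hpl := hplin x hx.1
        have heq : α / 2 * x⁻¹ = (α * x / 2) / x ^ 2 := by field_simp
        rw [heq]
        gcongr
    have hinv : (∫ z in (2*z₀)..ρ, α / 2 * z⁻¹) = α / 2 * (Real.log ρ - Real.log (2*z₀)) := by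
      rw [intervalIntegral.integral_const_mul, integral_inv]
      · rw [Real.log_div (ne_of_gt hρ0) (by linarith)]
      · rw [Set.uIcc_of_le hcase']
        intro h
        exact absurd h.1 (by linarith)
    have hIge : α / 2 * (Real.log ρ - Real.log (2*z₀)) ≤ ∫ z in (1:ℝ)..ρ, p z / z ^ 2 := by
      rw [← hsplit, ← hinv]
      linarith
    have hPge : ρ * (α / 2 * (Real.log ρ - Real.log (2*z₀))) ≤ P ρ := by
      rw [hP ρ]
      exact mul_le_mul_of_nonneg_left hIge (le_of_lt hρ0)
    have hα' : α ≠ 0 := ne_of_gt hα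
    have : ρ * (Real.log ρ - Real.log (2*z₀)) ≤ 2 / α * P ρ := by
      have := mul_le_mul_of_nonneg_left hPge (by positivity : (0:ℝ) ≤ 2 / α)
      calc ρ * (Real.log ρ - Real.log (2*z₀))
          = 2 / α * (ρ * (α / 2 * (Real.log ρ - Real.log (2*z₀)))) := by field_simp
        _ ≤ 2 / α * P ρ := this
    nlinarith [Real.log_nonneg (le_of_lt h2z₀)]
end

section
/- Let p : (0,∞) → ℝ be continuously differentiable with p′(z) > 0 for all z > 0, and suppose there exist z₀ > 0 and α > 0 with p′(z) ≥ α for all z ≥ z₀. Let 0 < a ≤ b. Then there exist constants s̄ > b and c > 0 such that for every r ∈ [a, b] and every s ≥ s̄: P(s) − P′(r)(s − r) − P(r) ≥ c · s. -/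
open MeasureTheory intervalIntegral

/-- If `p : (0,∞) → ℝ` is C¹ with `p′ > 0` and `p′(z) ≥ α > 0` for `z ≥ z₀`,
`P(ρ) = ρ ∫₁^ρ p(z)/z² dz`, and `0 < a ≤ b`, then there are `s̄ > b` and `c > 0` with
`P(s) − P′(r)(s−r) − P(r) ≥ c·s` for all `r ∈ [a,b]` and `s ≥ s̄`. -/
theorem stmt13 (p P : ℝ → ℝ) (hp : ContDiffOn ℝ 1 p (Set.Ioi 0))
    (hp' : ∀ z : ℝ, 0 < z → 0 < deriv p z)
    (z₀ α : ℝ) (hz₀ : 0 < z₀) (hα : 0 < α)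
    (hp'α : ∀ z : ℝ, z₀ ≤ z → α ≤ deriv p z)
    (a b : ℝ) (ha : 0 < a) (hab : a ≤ b)
    (hP : ∀ ρ : ℝ, P ρ = ρ * ∫ z in (1 : ℝ)..ρ, p z / z ^ 2) :
    ∃ sbar : ℝ, b < sbar ∧ ∃ c : ℝ, 0 < c ∧
      ∀ r ∈ Set.Icc a b, ∀ s : ℝ, sbar ≤ s →
        c * s ≤ P s - deriv P r * (s - r) - P r := by
  -- basic continuity / differentiability facts
  have hpc : ContinuousOn p (Set.Ioi 0) := hp.continuousOn
  have hpd : ∀ z : ℝ, 0 < z → DifferentiableAt ℝ p z := fun z hz =>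
    (hp.differentiableOn one_ne_zero).differentiableAt (Ioi_mem_nhds hz)
  -- p is strictly monotone on (0,∞)
  have hmono : StrictMonoOn p (Set.Ioi 0) := by
    apply strictMonoOn_of_deriv_pos (convex_Ioi 0) hpc
    intro x hx
    exact hp' x (by simpa [interior_Ioi] using hx)
  have hmono' : MonotoneOn p (Set.Ioi 0) := hmono.monotoneOn
  -- growth: for z₀ ≤ x ≤ y, α * (y - x) ≤ p y - p x
  have hgrow : ∀ x y : ℝ, z₀ ≤ x → x ≤ y → α * (y - x) ≤ p y - p x := by
    intro x y hx hxy
    have hmon : MonotoneOn (fun z => p z - α * z) (Set.Ici z₀) := by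
      apply monotoneOn_of_deriv_nonneg (convex_Ici z₀)
      · exact (hpc.mono (fun t ht => lt_of_lt_of_le hz₀ ht)).sub
          ((continuous_const.mul continuous_id).continuousOn)
      · intro t ht
        rw [interior_Ici] at ht
        exact ((hpd t (hz₀.trans ht)).sub
          ((differentiable_id.const_mul α) t)).differentiableWithinAt
      · intro t ht
        rw [interior_Ici] at ht
        have h1 : HasDerivAt (fun z => p z - α * z) (deriv p t - α * 1) t :=
          ((hpd t (hz₀.trans ht)).hasDerivAt).sub ((hasDerivAt_id t).const_mul α)
        rw [h1.deriv]
        have := hp'α t ht.le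
        linarith
    have := hmon (Set.mem_Ici.2 hx) (Set.mem_Ici.2 (hx.trans hxy)) hxy
    simp only at this
    linarith
  set m : ℝ := max z₀ b with hm
  have hm0 : 0 < m := lt_of_lt_of_le hz₀ (le_max_left _ _)
  have hbm : b ≤ m := le_max_right _ _
  have hz₀m : z₀ ≤ m := le_max_left _ _
  refine ⟨m + 2, by linarith, α / (m + 2) ^ 2, by positivity, ?_⟩
  intro r hr s hs
  have hr0 : 0 < r := lt_of_lt_of_le ha hr.1
  have hrb : r ≤ b := hr.2
  have hrm1 : r ≤ m + 1 := by linarith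
  have hrs : r ≤ s := by linarith
  have hs0 : 0 < s := lt_of_lt_of_le (by linarith) hs
  -- integrability lemmas
  have hgc : ContinuousOn (fun z : ℝ => p z / z ^ 2) (Set.Ioi 0) := by
    apply hpc.div (continuousOn_pow 2)
    intro z hz
    exact pow_ne_zero 2 (ne_of_gt hz)
  have hsubset : ∀ x y : ℝ, 0 < x → 0 < y → Set.uIcc x y ⊆ Set.Ioi 0 := by
    intro x y hx hy t ht
    exact lt_of_lt_of_le (lt_min hx hy) ht.1
  have hint : ∀ x y : ℝ, 0 < x → 0 < y →
      IntervalIntegrable (fun z : ℝ => p z / z ^ 2) volume x y := fun x y hx hy =>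
    (hgc.mono (hsubset x y hx hy)).intervalIntegrable
  -- the relative-pressure integrand
  set g : ℝ → ℝ := fun z => (p z - p r) / z ^ 2 with hg
  have hgcont : ContinuousOn g (Set.Ioi 0) := by
    apply (hpc.sub continuousOn_const).div (continuousOn_pow 2)
    intro z hz
    exact pow_ne_zero 2 (ne_of_gt hz)
  have hgint : ∀ x y : ℝ, 0 < x → 0 < y → IntervalIntegrable g volume x y := fun x y hx hy =>
    (hgcont.mono (hsubset x y hx hy)).intervalIntegrable
  -- compute deriv P r
  have hPfun : P = fun ρ => ρ * ∫ z in (1 : ℝ)..ρ, p z / z ^ 2 := funext hP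
  have hFder : HasDerivAt (fun u => ∫ z in (1 : ℝ)..u, p z / z ^ 2) (p r / r ^ 2) r := by
    apply intervalIntegral.integral_hasDerivAt_right (hint 1 r one_pos hr0)
    · exact ContinuousOn.stronglyMeasurableAtFilter isOpen_Ioi hgc r hr0
    · exact hgc.continuousAt (Ioi_mem_nhds hr0)
  have hPder : HasDerivAt P
      ((∫ z in (1 : ℝ)..r, p z / z ^ 2) + r * (p r / r ^ 2)) r := by
    rw [hPfun]
    have := (hasDerivAt_id r).mul hFder
    simpa [Pi.mul_def] using this
  have hderiv : deriv P r = (∫ z in (1 : ℝ)..r, p z / z ^ 2) + p r / r := by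
    rw [hPder.deriv]
    congr 1
    field_simp
  -- key identity: E(s,r) = s * ∫_r^s (p z - p r)/z²
  have hsplit : (∫ z in (1 : ℝ)..s, p z / z ^ 2) - (∫ z in (1 : ℝ)..r, p z / z ^ 2)
      = ∫ z in r..s, p z / z ^ 2 :=
    intervalIntegral.integral_interval_sub_left (hint 1 s one_pos hs0) (hint 1 r one_pos hr0)
  have hinv : (∫ z in r..s, (z : ℝ) ^ (-2 : ℤ)) = r⁻¹ - s⁻¹ := by
    rw [integral_zpow (Or.inr ⟨by norm_num,
      fun h => absurd (hsubset r s hr0 hs0 h) (by simp)⟩)]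
    norm_num
    ring
  have hzc : ContinuousOn (fun z : ℝ => p r * z ^ (-2 : ℤ)) (Set.uIcc r s) := by
    apply continuousOn_const.mul
    intro z hz
    exact (continuousAt_zpow₀ z (-2) (Or.inl (ne_of_gt (hsubset r s hr0 hs0 hz)))).continuousWithinAt
  have hginteq : (∫ z in r..s, g z)
      = (∫ z in r..s, p z / z ^ 2) - p r * (r⁻¹ - s⁻¹) := by
    have h1 : ∀ z ∈ Set.uIcc r s, g z = p z / z ^ 2 - p r * z ^ (-2 : ℤ) := by
      intro z hz
      have hz0 : (0:ℝ) < z := hsubset r s hr0 hs0 hz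
      have hz' : z ≠ 0 := ne_of_gt hz0
      simp only [hg]
      rw [zpow_neg, zpow_two]
      field_simp
    rw [intervalIntegral.integral_congr h1,
      intervalIntegral.integral_sub (hint r s hr0 hs0) hzc.intervalIntegrable,
      intervalIntegral.integral_const_mul, hinv]
  have hEid : P s - deriv P r * (s - r) - P r = s * ∫ z in r..s, g z := by
    rw [hP s, hP r, hderiv, hginteq, ← hsplit]
    field_simp
    ring
  -- lower bound on the middle piece [m+1, m+2]
  have hkey : ∀ z ∈ Set.Icc (m + 1) (m + 2), α / (m + 2) ^ 2 ≤ g z := by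
    intro z hz
    have hz1 : m + 1 ≤ z := hz.1
    have hz2 : z ≤ m + 2 := hz.2
    have hz0 : (0:ℝ) < z := by linarith
    have h1 : p r ≤ p m := hmono' (Set.mem_Ioi.2 hr0) (Set.mem_Ioi.2 hm0) (by linarith)
    have h2 : α * (z - m) ≤ p z - p m := hgrow m z hz₀m (by linarith)
    have h3 : α ≤ p z - p r := by nlinarith
    exact div_le_div₀ (le_trans hα.le h3) h3 (by positivity) (by nlinarith)
  have hmid : α / (m + 2) ^ 2 ≤ ∫ z in (m + 1)..(m + 2), g z := by
    have h := intervalIntegral.integral_mono_on (f := fun _ => α / (m + 2) ^ 2)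
      (by linarith : m + 1 ≤ m + 2) intervalIntegrable_const
      (hgint (m + 1) (m + 2) (by linarith) (by linarith)) hkey
    rwa [intervalIntegral.integral_const, smul_eq_mul, show m + 2 - (m + 1) = 1 by ring,
      one_mul] at h
  -- nonnegativity of the side pieces
  have hgnn : ∀ x y : ℝ, r ≤ x → x ≤ y → (0:ℝ) ≤ ∫ z in x..y, g z := by
    intro x y hx hxy
    apply intervalIntegral.integral_nonneg hxy
    intro z hz
    have hz0 : (0:ℝ) < z := lt_of_lt_of_le hr0 (hx.trans hz.1)
    have : p r ≤ p z := hmono' (Set.mem_Ioi.2 hr0) (Set.mem_Ioi.2 hz0)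
      (hx.trans hz.1)
    simp only [hg]
    exact div_nonneg (by linarith) (sq_nonneg z)
  have hsum : (∫ z in r..(m + 1), g z) + (∫ z in (m + 1)..(m + 2), g z)
      + (∫ z in (m + 2)..s, g z) = ∫ z in r..s, g z := by
    rw [intervalIntegral.integral_add_adjacent_intervals (hgint r (m + 1) hr0 (by linarith))
        (hgint (m + 1) (m + 2) (by linarith) (by linarith)),
      intervalIntegral.integral_add_adjacent_intervals (hgint r (m + 2) hr0 (by linarith))
        (hgint (m + 2) s (by linarith) hs0)]
  have hItot : α / (m + 2) ^ 2 ≤ ∫ z in r..s, g z := by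
    have h1 := hgnn r (m + 1) le_rfl hrm1
    have h2 := hgnn (m + 2) s (by linarith) hs
    rw [← hsum]
    linarith
  rw [hEid]
  calc α / (m + 2) ^ 2 * s = s * (α / (m + 2) ^ 2) := mul_comm _ _
    _ ≤ s * ∫ z in r..s, g z := mul_le_mul_of_nonneg_left hItot hs0.le
end

section
/- Let p : [0,∞) → ℝ be continuous on [0,∞) and twice continuously differentiable on (0,∞), with p(0) = 0, p′(ρ) > 0 for all ρ > 0, liminf_{ρ→∞} p′(ρ) > 0 and liminf_{ρ→∞} P(ρ)/p(ρ) > 0. Let 0 < a ≤ b. Then there exists a constant c > 0 such that for every r ∈ [a, b] and every s > 0: |p(s) − p′(r)(s − r) − p(r)| ≤ c ( P(s) − P′(r)(s − r) − P(r) ). -/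
open MeasureTheory intervalIntegral

/-- For `p` continuous on `[0,∞)`, C² on `(0,∞)`, with `p(0)=0`, `p′ > 0`,
`liminf_{ρ→∞} p′(ρ) > 0` and `liminf_{ρ→∞} P(ρ)/p(ρ) > 0` (expressed as eventual lower
bounds by positive constants), and `0 < a ≤ b`, there is `c > 0` such that for all
`r ∈ [a,b]`, `s > 0`:
`|p(s) − p′(r)(s−r) − p(r)| ≤ c (P(s) − P′(r)(s−r) − P(r))`. -/
theorem stmt15 (p P : ℝ → ℝ)
    (hpc : ContinuousOn p (Set.Ici 0))
    (hp2 : ContDiffOn ℝ 2 p (Set.Ioi 0))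
    (hp00 : p 0 = 0)
    (hp' : ∀ ρ : ℝ, 0 < ρ → 0 < deriv p ρ)
    (hp'inf : ∃ α : ℝ, 0 < α ∧ ∀ᶠ ρ in Filter.atTop, α ≤ deriv p ρ)
    (hPpinf : ∃ β : ℝ, 0 < β ∧ ∀ᶠ ρ in Filter.atTop, β ≤ P ρ / p ρ)
    (hP : ∀ ρ : ℝ, P ρ = ρ * ∫ z in (1 : ℝ)..ρ, p z / z ^ 2)
    (a b : ℝ) (ha : 0 < a) (hab : a ≤ b) :
    ∃ c : ℝ, 0 < c ∧ ∀ r ∈ Set.Icc a b, ∀ s : ℝ, 0 < s →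
      |p s - deriv p r * (s - r) - p r| ≤ c * (P s - deriv P r * (s - r) - P r) := by
  obtain ⟨α, hα, hα'⟩ := hp'inf
  obtain ⟨β, hβ, hβ'⟩ := hPpinf
  set G : ℝ → ℝ := fun ρ => ∫ z in (1:ℝ)..ρ, p z / z ^ 2 with hGdef
  have hpc' : ContinuousOn p (Set.Ioi 0) := hpc.mono Set.Ioi_subset_Ici_self
  -- subset helper
  have hsub : ∀ x y : ℝ, 0 < x → 0 < y → Set.uIcc x y ⊆ Set.Ioi 0 :=
    fun x y hx hy z hz => (lt_min hx hy).trans_le hz.1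
  -- derivative facts for p
  have hp1 : ContDiffOn ℝ 1 (deriv p) (Set.Ioi 0) :=
    hp2.deriv_of_isOpen isOpen_Ioi (by norm_num)
  have hpdiff : ∀ x ∈ Set.Ioi (0:ℝ), HasDerivAt p (deriv p x) x := fun x hx =>
    ((hp2.differentiableOn (by norm_num)).differentiableAt (isOpen_Ioi.mem_nhds hx)).hasDerivAt
  have hp'cont : ContinuousOn (deriv p) (Set.Ioi 0) :=
    hp2.continuousOn_deriv_of_isOpen isOpen_Ioi (by norm_num)
  have hp''diff : ∀ x ∈ Set.Ioi (0:ℝ), HasDerivAt (deriv p) (deriv (deriv p) x) x := fun x hx =>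
    ((hp1.differentiableOn (by norm_num)).differentiableAt (isOpen_Ioi.mem_nhds hx)).hasDerivAt
  have hp''cont : ContinuousOn (deriv (deriv p)) (Set.Ioi 0) :=
    hp1.continuousOn_deriv_of_isOpen isOpen_Ioi le_rfl
  -- positivity of p
  have hppos : ∀ s : ℝ, 0 < s → 0 < p s := by
    intro s hs
    have := strictMonoOn_of_deriv_pos (convex_Ici 0) hpc
      (fun x hx => hp' x (by simpa [interior_Ici] using hx)) (Set.self_mem_Ici)
      (Set.mem_Ici.2 hs.le) hs
    simpa [hp00] using this
  -- FTC facts for G and P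
  have hcontq : ContinuousOn (fun z : ℝ => p z / z ^ 2) (Set.Ioi 0) :=
    hpc'.div (by fun_prop) (fun x hx => by have : (0:ℝ) < x := hx; positivity)
  have hGd : ∀ x : ℝ, 0 < x → HasDerivAt G (p x / x ^ 2) x := by
    intro x hx
    have huIcc : Set.uIcc (1:ℝ) x ⊆ Set.Ioi 0 := hsub 1 x one_pos hx
    exact intervalIntegral.integral_hasDerivAt_right
      ((hcontq.mono huIcc).intervalIntegrable)
      (hcontq.stronglyMeasurableAtFilter isOpen_Ioi x hx)
      ((hcontq x hx).continuousAt (isOpen_Ioi.mem_nhds hx))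
  have hPd : ∀ x : ℝ, 0 < x → HasDerivAt P (G x + p x / x) x := by
    intro x hx
    have h2 : HasDerivAt (fun ρ => ρ * G ρ) (1 * G x + x * (p x / x ^ 2)) x :=
      (hasDerivAt_id x).mul (hGd x hx)
    have hPG : P = fun ρ => ρ * G ρ := funext hP
    rw [hPG]
    convert h2 using 1
    field_simp
  have hP'eq : ∀ x : ℝ, 0 < x → deriv P x = G x + p x / x := fun x hx => (hPd x hx).deriv
  have hPd' : ∀ x : ℝ, 0 < x → HasDerivAt P (deriv P x) x := by
    intro x hx; rw [hP'eq x hx]; exact hPd x hx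
  have hGcont : ContinuousOn G (Set.Ioi 0) :=
    fun x hx => ((hGd x hx).continuousAt).continuousWithinAt
  have hPcont : ContinuousOn P (Set.Ioi 0) :=
    fun x hx => ((hPd x hx).continuousAt).continuousWithinAt
  have hP'cont : ContinuousOn (deriv P) (Set.Ioi 0) := by
    have : ContinuousOn (fun x => G x + p x / x) (Set.Ioi 0) :=
      hGcont.add (hpc'.div continuousOn_id (fun x hx => ne_of_gt hx))
    exact this.congr (fun x hx => hP'eq x hx)
  -- integral formula for differences of deriv P
  have hP'sub : ∀ x y : ℝ, 0 < x → 0 < y →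
      deriv P y - deriv P x = ∫ t in x..y, deriv p t / t := by
    intro x y hx hy
    have hd : ∀ t ∈ Set.uIcc x y, HasDerivAt (fun u => G u + p u / u) (deriv p t / t) t := by
      intro t ht
      have ht0 : (0:ℝ) < t := hsub x y hx hy ht
      have h1 : HasDerivAt (fun u => p u / u)
          ((deriv p t * t - p t * 1) / t ^ 2) t :=
        (hpdiff t ht0).div (hasDerivAt_id t) (ne_of_gt ht0)
      have := (hGd t ht0).add h1
      have ht' : t ≠ 0 := ne_of_gt ht0
      have e : deriv p t / t = p t / t ^ 2 + (deriv p t * t - p t * 1) / t ^ 2 := by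
        field_simp
        ring
      rw [e]; exact this
    have hint : IntervalIntegrable (fun t => deriv p t / t) volume x y :=
      ((hp'cont.div continuousOn_id (fun z hz => ne_of_gt hz)).mono
        (hsub x y hx hy)).intervalIntegrable
    rw [intervalIntegral.integral_eq_sub_of_hasDerivAt hd hint, hP'eq x hx, hP'eq y hy]
  -- monotonicity of deriv P
  have hP'mono : ∀ x y : ℝ, 0 < x → x ≤ y → deriv P x ≤ deriv P y := by
    intro x y hx hxy
    have h := hP'sub x y hx (hx.trans_le hxy)
    have : 0 ≤ ∫ t in x..y, deriv p t / t := by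
      apply intervalIntegral.integral_nonneg hxy
      intro u hu
      have hu0 : 0 < u := lt_of_lt_of_le hx hu.1
      have := (hp' u hu0).le
      positivity
    linarith
  -- integral formula for difference of deriv p
  have hp'sub : ∀ x y : ℝ, 0 < x → 0 < y →
      deriv p y - deriv p x = ∫ t in x..y, deriv (deriv p) t := by
    intro x y hx hy
    refine (intervalIntegral.integral_eq_sub_of_hasDerivAt
      (fun t ht => hp''diff t (hsub x y hx hy ht))
      ((hp''cont.mono (hsub x y hx hy)).intervalIntegrable)).symm
  -- Taylor-type integral identities
  have hgint : ∀ r s : ℝ, 0 < r → 0 < s →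
      p s - deriv p r * (s - r) - p r = ∫ t in r..s, (deriv p t - deriv p r) := by
    intro r s hr hs
    have hd : ∀ t ∈ Set.uIcc r s,
        HasDerivAt (fun u => p u - deriv p r * u) (deriv p t - deriv p r) t := by
      intro t ht
      have h := (hpdiff t (hsub r s hr hs ht)).sub ((hasDerivAt_id t).const_mul (deriv p r))
      rw [mul_one] at h; exact h
    have hint : IntervalIntegrable (fun t => deriv p t - deriv p r) volume r s :=
      (((hp'cont.mono (hsub r s hr hs))).sub continuousOn_const).intervalIntegrable
    rw [intervalIntegral.integral_eq_sub_of_hasDerivAt hd hint]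
    ring
  have hEint : ∀ r s : ℝ, 0 < r → 0 < s →
      P s - deriv P r * (s - r) - P r = ∫ t in r..s, (deriv P t - deriv P r) := by
    intro r s hr hs
    have hd : ∀ t ∈ Set.uIcc r s,
        HasDerivAt (fun u => P u - deriv P r * u) (deriv P t - deriv P r) t := by
      intro t ht
      have h := (hPd' t (hsub r s hr hs ht)).sub ((hasDerivAt_id t).const_mul (deriv P r))
      rw [mul_one] at h; exact h
    have hint : IntervalIntegrable (fun t => deriv P t - deriv P r) volume r s :=
      (((hP'cont.mono (hsub r s hr hs))).sub continuousOn_const).intervalIntegrable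
    rw [intervalIntegral.integral_eq_sub_of_hasDerivAt hd hint]
    ring
  -- nonnegativity of the relative pressure potential
  have hEnonneg : ∀ r ∈ Set.Icc a b, ∀ s : ℝ, 0 < s →
      0 ≤ P s - deriv P r * (s - r) - P r := by
    intro r hr s hs
    have hr0 : 0 < r := lt_of_lt_of_le ha hr.1
    rw [hEint r s hr0 hs]
    rcases le_total r s with h | h
    · apply intervalIntegral.integral_nonneg h
      intro u hu
      have := hP'mono r u hr0 hu.1
      linarith
    · rw [intervalIntegral.integral_symm, ← intervalIntegral.integral_neg]
      apply intervalIntegral.integral_nonneg h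
      intro u hu
      have := hP'mono u r (lt_of_lt_of_le hs hu.1) hu.2
      simp only [neg_sub]
      linarith
  -- strict monotonicity of deriv P
  have hP'strict : ∀ x y : ℝ, 0 < x → x < y → deriv P x < deriv P y := by
    intro x y hx hxy
    have h := hP'sub x y hx (hx.trans hxy)
    have hpos : 0 < ∫ t in x..y, deriv p t / t := by
      apply intervalIntegral.intervalIntegral_pos_of_pos_on
      · exact ((hp'cont.div continuousOn_id (fun z hz => ne_of_gt hz)).mono
          (hsub x y hx (hx.trans hxy))).intervalIntegrable
      · intro u hu
        have hu0 : 0 < u := hx.trans hu.1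
        exact div_pos (hp' u hu0) hu0
      · exact hxy
    linarith
  -- bounds on compact sets
  have hA : Set.Icc a b ⊆ Set.Ioi 0 := fun x hx => lt_of_lt_of_le ha hx.1
  have habm : a ∈ Set.Icc a b := ⟨le_rfl, hab⟩
  obtain ⟨Cp, hCp⟩ := isCompact_Icc.exists_bound_of_continuousOn (hpc'.mono hA)
  obtain ⟨Cp', hCp'⟩ := isCompact_Icc.exists_bound_of_continuousOn (hp'cont.mono hA)
  obtain ⟨CP, hCP⟩ := isCompact_Icc.exists_bound_of_continuousOn (hPcont.mono hA)
  obtain ⟨CP', hCP'⟩ := isCompact_Icc.exists_bound_of_continuousOn (hP'cont.mono hA)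
  obtain ⟨Cp0, hCp0⟩ := (isCompact_Icc : IsCompact (Set.Icc (0:ℝ) a)).exists_bound_of_continuousOn
    (hpc.mono (fun x hx => hx.1))
  simp only [Real.norm_eq_abs] at hCp hCp' hCP hCP' hCp0
  have hCpn : 0 ≤ Cp := le_trans (abs_nonneg _) (hCp a habm)
  have hCp'n : 0 ≤ Cp' := le_trans (abs_nonneg _) (hCp' a habm)
  have hCPn : 0 ≤ CP := le_trans (abs_nonneg _) (hCP a habm)
  have hCP'n : 0 ≤ CP' := le_trans (abs_nonneg _) (hCP' a habm)
  have hCp0n : 0 ≤ Cp0 := le_trans (abs_nonneg _) (hCp0 a ⟨ha.le, le_rfl⟩)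
  -- the minimum δ of E(a/2, ·) on [a,b]
  have ha2 : (0:ℝ) < a/2 := by linarith
  have hEc : ContinuousOn (fun r => P (a/2) - deriv P r * (a/2 - r) - P r) (Set.Icc a b) := by
    exact (continuousOn_const.sub ((hP'cont.mono hA).mul
      (continuousOn_const.sub continuousOn_id))).sub (hPcont.mono hA)
  obtain ⟨r₀, hr₀, hminE⟩ := isCompact_Icc.exists_isMinOn ⟨a, habm⟩ hEc
  set δ := P (a/2) - deriv P r₀ * (a/2 - r₀) - P r₀ with hδdef
  clear_value δ
  have hr₀0 : 0 < r₀ := lt_of_lt_of_le ha hr₀.1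
  have ha2r₀ : a/2 < r₀ := by have := hr₀.1; linarith
  have hδpos : 0 < δ := by
    have h1 : δ = ∫ t in (a/2)..r₀, (deriv P r₀ - deriv P t) := by
      have h2 : P r₀ - deriv P (a/2) * (r₀ - a/2) - P (a/2)
          = ∫ t in (a/2)..r₀, (deriv P t - deriv P (a/2)) := hEint (a/2) r₀ ha2 hr₀0
      have h3 : ∫ t in (a/2)..r₀, (deriv P r₀ - deriv P t)
          = (r₀ - a/2) * deriv P r₀ - (∫ t in (a/2)..r₀, deriv P t) := by
        rw [intervalIntegral.integral_sub intervalIntegrable_const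
          ((hP'cont.mono (hsub (a/2) r₀ ha2 hr₀0)).intervalIntegrable)]
        simp [smul_eq_mul]
      have h4 : ∫ t in (a/2)..r₀, deriv P t = P r₀ - P (a/2) :=
        intervalIntegral.integral_eq_sub_of_hasDerivAt
          (fun t ht => hPd' t (hsub (a/2) r₀ ha2 hr₀0 ht))
          ((hP'cont.mono (hsub (a/2) r₀ ha2 hr₀0)).intervalIntegrable)
      rw [h3, h4, hδdef]
      ring
    rw [h1]
    apply intervalIntegral.intervalIntegral_pos_of_pos_on
    · exact (continuousOn_const.sub (hP'cont.mono (hsub (a/2) r₀ ha2 hr₀0))).intervalIntegrable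
    · intro u hu
      have hu0 : 0 < u := ha2.trans hu.1
      linarith [hP'strict u r₀ hu0 hu.2]
    · exact ha2r₀
  set M₁ := Cp0 + Cp' * b + Cp with hM₁def
  clear_value M₁
  have hM₁n : 0 ≤ M₁ := by
    have := mul_nonneg hCp'n (le_trans ha.le hab)
    rw [hM₁def]; linarith
  -- small region
  have key_small : ∀ r ∈ Set.Icc a b, ∀ s : ℝ, 0 < s → s ≤ a/2 →
      δ ≤ P s - deriv P r * (s - r) - P r := by
    intro r hr s hs hs2
    have hr0 : 0 < r := lt_of_lt_of_le ha hr.1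
    have h4 : ∫ t in s..(a/2), deriv P t = P (a/2) - P s :=
      intervalIntegral.integral_eq_sub_of_hasDerivAt
        (fun t ht => hPd' t (hsub s (a/2) hs ha2 ht))
        ((hP'cont.mono (hsub s (a/2) hs ha2)).intervalIntegrable)
    have h3 : ∫ t in s..(a/2), (deriv P r - deriv P t)
        = (a/2 - s) * deriv P r - (P (a/2) - P s) := by
      rw [intervalIntegral.integral_sub intervalIntegrable_const
        ((hP'cont.mono (hsub s (a/2) hs ha2)).intervalIntegrable), h4]
      simp [smul_eq_mul]
    have h5 : 0 ≤ ∫ t in s..(a/2), (deriv P r - deriv P t) := by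
      apply intervalIntegral.integral_nonneg hs2
      intro u hu
      have hu0 : 0 < u := lt_of_lt_of_le hs hu.1
      have : deriv P u ≤ deriv P r := hP'mono u r hu0 (le_trans hu.2 (by linarith [hr.1]))
      linarith
    have h6 : δ ≤ P (a/2) - deriv P r * (a/2 - r) - P r := by
      have h := hminE hr
      simp only [Set.mem_setOf_eq] at h
      rw [hδdef]
      exact h
    rw [h3] at h5
    have hid : (P s - deriv P r * (s - r) - P r) - (P (a/2) - deriv P r * (a/2 - r) - P r)
        = (a/2 - s) * deriv P r - (P (a/2) - P s) := by ring
    linarith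
  -- large region preparation
  obtain ⟨R₀, hR₀⟩ := Filter.eventually_atTop.mp hα'
  set R₁ := max R₀ 1 with hR₁def
  have hR₁pos : (0:ℝ) < R₁ := lt_of_lt_of_le one_pos (le_max_right _ _)
  have hR₁α : ∀ z : ℝ, R₁ ≤ z → α ≤ deriv p z := fun z hz => hR₀ z ((le_max_left _ _).trans hz)
  set R₃ := 2 * R₁ with hR₃def
  have hR₃pos : (0:ℝ) < R₃ := by positivity
  have hlin : ∀ z : ℝ, R₃ ≤ z → α/2 * z ≤ p z := by
    intro z hz
    have hzR₁ : R₁ ≤ z := by rw [hR₃def] at hz; linarith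
    have h1 : MonotoneOn (fun u => p u - α * u) (Set.Ici R₁) := by
      apply monotoneOn_of_deriv_nonneg (convex_Ici R₁)
      · exact (hpc'.mono (fun x hx => lt_of_lt_of_le hR₁pos hx)).sub
          (continuousOn_const.mul continuousOn_id)
      · intro x hx
        rw [interior_Ici] at hx
        have hx0 : 0 < x := hR₁pos.trans hx
        exact ((hpdiff x hx0).sub ((hasDerivAt_id x).const_mul α)).differentiableAt.differentiableWithinAt
      · intro x hx
        rw [interior_Ici] at hx
        have hx0 : 0 < x := hR₁pos.trans hx
        have hD : deriv (fun u => p u - α * u) x = deriv p x - α := by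
          have := ((hpdiff x hx0).sub ((hasDerivAt_id x).const_mul α)).deriv
          rw [mul_one] at this; exact this
        rw [hD]
        linarith [hR₁α x hx.le]
    have h2 := h1 (Set.self_mem_Ici) (Set.mem_Ici.2 hzR₁) hzR₁
    simp only at h2
    have h3 : 0 < p R₁ := hppos R₁ hR₁pos
    have h4 : α * R₁ ≤ α/2 * z := by
      rw [hR₃def] at hz
      nlinarith
    nlinarith
  have hGlow : ∀ s : ℝ, R₃ ≤ s → G R₃ + α/2 * (Real.log s - Real.log R₃) ≤ G s := by
    intro s hs
    have hs0 : 0 < s := hR₃pos.trans_le hs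
    have i1 : IntervalIntegrable (fun z : ℝ => p z / z ^ 2) volume 1 R₃ :=
      (hcontq.mono (hsub 1 R₃ one_pos hR₃pos)).intervalIntegrable
    have i2 : IntervalIntegrable (fun z : ℝ => p z / z ^ 2) volume R₃ s :=
      (hcontq.mono (hsub R₃ s hR₃pos hs0)).intervalIntegrable
    have h0 := intervalIntegral.integral_add_adjacent_intervals i1 i2
    have i3 : IntervalIntegrable (fun z : ℝ => α/2 * (1/z)) volume R₃ s := by
      apply ContinuousOn.intervalIntegrable
      apply ContinuousOn.mono _ (hsub R₃ s hR₃pos hs0)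
      exact continuousOn_const.mul (continuousOn_const.div continuousOn_id
        (fun z hz => ne_of_gt hz))
    have h1 : ∫ z in R₃..s, α/2 * (1/z) ≤ ∫ z in R₃..s, p z / z ^ 2 := by
      apply intervalIntegral.integral_mono_on hs i3 i2
      intro z hz
      have hz0 : 0 < z := hR₃pos.trans_le hz.1
      have h2 := hlin z hz.1
      calc α/2 * (1/z) = (α/2 * z) / z ^ 2 := by field_simp
        _ ≤ p z / z ^ 2 := by apply div_le_div_of_nonneg_right h2 (by positivity)
    have h2 : ∫ z in R₃..s, α/2 * (1/z) = α/2 * (Real.log s - Real.log R₃) := by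
      rw [intervalIntegral.integral_const_mul, integral_one_div
        (fun hmem => absurd ((lt_min hR₃pos hs0).trans_le hmem.1) (lt_irrefl 0)),
        Real.log_div (ne_of_gt hs0) (ne_of_gt hR₃pos)]
    have hGs : G s = G R₃ + ∫ z in R₃..s, p z / z ^ 2 := by
      rw [hGdef]; simp only; linarith [h0]
    rw [hGs]
    linarith
  -- eventual bounds and choice of S
  set C₈ := Cp' * b + Cp with hC₈def
  clear_value C₈
  have hC₈n : 0 ≤ C₈ := by
    have := mul_nonneg hCp'n (le_trans ha.le hab)
    rw [hC₈def]; linarith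
  set T₀ := CP' + CP' * b + CP + β/2 * Cp' + β/2 * C₈ with hT₀def
  clear_value T₀
  have hT₀n : 0 ≤ T₀ := by
    have e1 := mul_nonneg hCP'n (le_trans ha.le hab)
    have e2 : 0 ≤ β/2 * Cp' := mul_nonneg (by positivity) hCp'n
    have e3 : 0 ≤ β/2 * C₈ := mul_nonneg (by positivity) hC₈n
    rw [hT₀def]; linarith
  have hev1 : ∀ᶠ s in Filter.atTop, β * p s ≤ P s := by
    filter_upwards [hβ', Filter.eventually_gt_atTop (0:ℝ)] with s h1 h2
    exact (le_div_iff₀ (hppos s h2)).mp h1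
  have hev2 : ∀ᶠ s in Filter.atTop, 2 * T₀ ≤ G s := by
    have hlog : Filter.Tendsto (fun s => G R₃ + α/2 * (Real.log s - Real.log R₃))
        Filter.atTop Filter.atTop := by
      apply Filter.tendsto_atTop_add_const_left
      apply Filter.Tendsto.const_mul_atTop (by positivity)
      exact Filter.tendsto_atTop_add_const_right _ _ Real.tendsto_log_atTop
    filter_upwards [hlog.eventually_ge_atTop (2*T₀), Filter.eventually_ge_atTop R₃] with s h1 h2
    exact le_trans h1 (hGlow s h2)
  obtain ⟨S₀, hS₀⟩ := Filter.eventually_atTop.mp (hev1.and hev2)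
  set S := max S₀ (max (b+1) 1) with hSdef
  clear_value S
  have hbS : b + 1 ≤ S := by
    rw [hSdef]; exact (le_max_left _ _).trans (le_max_right _ _)
  have hS1 : (1:ℝ) ≤ S := by
    rw [hSdef]; exact (le_max_right _ _).trans (le_max_right _ _)
  have haS : a/2 < S := by linarith
  -- large region
  have key_large : ∀ r ∈ Set.Icc a b, ∀ s : ℝ, S ≤ s →
      |p s - deriv p r * (s - r) - p r| ≤ 2/β * (P s - deriv P r * (s - r) - P r) := by
    intro r hr s hsS
    have hr0 : 0 < r := lt_of_lt_of_le ha hr.1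
    have hs1 : (1:ℝ) ≤ s := hS1.trans hsS
    have hs0 : (0:ℝ) < s := by linarith
    obtain ⟨h1, h2⟩ := hS₀ s (((le_max_left _ _).trans_eq hSdef.symm).trans hsS)
    have hPs : β/2 * p s + s * T₀ ≤ P s := by
      have hPg : P s = s * G s := hP s
      have h3 : s * (2 * T₀) ≤ s * G s := mul_le_mul_of_nonneg_left h2 hs0.le
      rw [← hPg] at h3
      linarith only [h3, h1]
    have habs : |s - r| ≤ s + b := by
      calc |s - r| ≤ |s| + |r| := abs_sub s r
        _ = s + r := by rw [abs_of_pos hs0, abs_of_pos hr0]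
        _ ≤ s + b := by linarith [hr.2]
    have hg : |p s - deriv p r * (s - r) - p r| ≤ p s + Cp' * s + C₈ := by
      calc |p s - deriv p r * (s - r) - p r|
          ≤ |p s - deriv p r * (s - r)| + |p r| := abs_sub _ _
        _ ≤ (|p s| + |deriv p r * (s - r)|) + |p r| := by linarith [abs_sub (p s) (deriv p r * (s - r))]
        _ = |p s| + |deriv p r| * |s - r| + |p r| := by rw [abs_mul]
        _ ≤ p s + Cp' * (s + b) + Cp := by
            have e1 : |p s| = p s := abs_of_pos (hppos s hs0)
            have e2 : |deriv p r| * |s - r| ≤ Cp' * (s + b) :=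
              mul_le_mul (hCp' r hr) habs (abs_nonneg _) hCp'n
            linarith [hCp r hr]
        _ = p s + Cp' * s + C₈ := by rw [hC₈def]; ring
    have h4 : deriv P r * (s - r) ≤ CP' * (s + b) := by
      calc deriv P r * (s - r) ≤ |deriv P r * (s - r)| := le_abs_self _
        _ = |deriv P r| * |s - r| := abs_mul _ _
        _ ≤ CP' * (s + b) := mul_le_mul (hCP' r hr) habs (abs_nonneg _) hCP'n
    have h5 : P r ≤ CP := (abs_le.mp (hCP r hr)).2
    have h6 : CP' * s + (CP' * b + CP) + β/2 * (Cp' * s) + β/2 * C₈ ≤ s * T₀ := by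
      have e1 : CP' * b ≤ s * (CP' * b) :=
        le_mul_of_one_le_left (mul_nonneg hCP'n (le_trans ha.le hab)) hs1
      have e2 : CP ≤ s * CP := le_mul_of_one_le_left hCPn hs1
      have e3 : β/2 * C₈ ≤ s * (β/2 * C₈) :=
        le_mul_of_one_le_left (mul_nonneg (by positivity) hC₈n) hs1
      rw [hT₀def]
      linarith only [e1, e2, e3]
    have hE : β/2 * (p s + Cp' * s + C₈) ≤ P s - deriv P r * (s - r) - P r := by
      linarith only [hPs, h4, h5, h6]
    have hE2 : β/2 * |p s - deriv p r * (s - r) - p r|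
        ≤ P s - deriv P r * (s - r) - P r :=
      le_trans (mul_le_mul_of_nonneg_left hg (by positivity)) hE
    calc |p s - deriv p r * (s - r) - p r|
        = 2/β * (β/2 * |p s - deriv p r * (s - r) - p r|) := by field_simp
      _ ≤ 2/β * (P s - deriv P r * (s - r) - P r) :=
          mul_le_mul_of_nonneg_left hE2 (by positivity)
  -- middle region
  have hmidsub : Set.Icc (a/2) S ⊆ Set.Ioi 0 := fun x hx => lt_of_lt_of_le ha2 hx.1
  have hABmid : Set.Icc a b ⊆ Set.Icc (a/2) S :=
    fun x hx => ⟨le_trans (by linarith) hx.1, le_trans hx.2 (by linarith)⟩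
  obtain ⟨M, hM⟩ := (isCompact_Icc : IsCompact (Set.Icc (a/2) S)).exists_bound_of_continuousOn
    (hp''cont.mono hmidsub)
  simp only [Real.norm_eq_abs] at hM
  have hq'cont : ContinuousOn (fun z => deriv p z / z) (Set.Icc (a/2) S) :=
    ((hp'cont.div continuousOn_id (fun z hz => ne_of_gt hz)).mono hmidsub)
  obtain ⟨zm, hzm, hzmin⟩ := (isCompact_Icc : IsCompact (Set.Icc (a/2) S)).exists_isMinOn
    ⟨a/2, le_rfl, haS.le⟩ hq'cont
  set m := deriv p zm / zm with hmdef
  clear_value m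
  have hm : 0 < m := by
    rw [hmdef]; exact div_pos (hp' zm (hmidsub hzm)) (hmidsub hzm)
  have hMn : 0 ≤ M := le_trans (abs_nonneg _) (hM (a/2) ⟨le_rfl, haS.le⟩)
  have hMm : 0 ≤ M/m := div_nonneg hMn hm.le
  have hkey : ∀ x y : ℝ, a/2 ≤ x → x ≤ y → y ≤ S →
      |deriv p y - deriv p x| ≤ M/m * (deriv P y - deriv P x) := by
    intro x y h1 h2 h3
    have hx0 : 0 < x := lt_of_lt_of_le ha2 h1
    have hy0 : 0 < y := lt_of_lt_of_le hx0 h2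
    have i1 : IntervalIntegrable (fun t => |deriv (deriv p) t|) volume x y :=
      ((hp''cont.mono (hsub x y hx0 hy0)).abs).intervalIntegrable
    have i2 : IntervalIntegrable (fun t => M/m * (deriv p t / t)) volume x y :=
      (continuousOn_const.mul ((hp'cont.div continuousOn_id
        (fun z hz => ne_of_gt hz)).mono (hsub x y hx0 hy0))).intervalIntegrable
    calc |deriv p y - deriv p x| = |∫ t in x..y, deriv (deriv p) t| := by
          rw [← hp'sub x y hx0 hy0]
      _ ≤ ∫ t in x..y, |deriv (deriv p) t| :=
          intervalIntegral.abs_integral_le_integral_abs h2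
      _ ≤ ∫ t in x..y, M/m * (deriv p t / t) := by
          apply intervalIntegral.integral_mono_on h2 i1 i2
          intro t ht
          have htm : t ∈ Set.Icc (a/2) S := ⟨le_trans h1 ht.1, le_trans ht.2 h3⟩
          have hmt : m ≤ deriv p t / t := by
            have h := hzmin htm
            simp only [Set.mem_setOf_eq] at h
            rw [hmdef]; exact h
          calc |deriv (deriv p) t| ≤ M := hM t htm
            _ = M/m * m := by field_simp
            _ ≤ M/m * (deriv p t / t) := mul_le_mul_of_nonneg_left hmt hMm
      _ = M/m * (deriv P y - deriv P x) := by
          rw [intervalIntegral.integral_const_mul, ← hP'sub x y hx0 hy0]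
  have key_mid : ∀ r ∈ Set.Icc a b, ∀ s : ℝ, a/2 ≤ s → s ≤ S →
      |p s - deriv p r * (s - r) - p r|
        ≤ M/m * (P s - deriv P r * (s - r) - P r) := by
    intro r hr s h1 h2
    have hr0 : 0 < r := lt_of_lt_of_le ha hr.1
    have hs0 : 0 < s := lt_of_lt_of_le ha2 h1
    have hrm : r ∈ Set.Icc (a/2) S := hABmid hr
    rw [hgint r s hr0 hs0, hEint r s hr0 hs0]
    rcases le_total r s with hc | hc
    · have i1 : IntervalIntegrable (fun t => |deriv p t - deriv p r|) volume r s :=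
        (((hp'cont.mono (hsub r s hr0 hs0)).sub continuousOn_const).abs).intervalIntegrable
      have i2 : IntervalIntegrable (fun t => M/m * (deriv P t - deriv P r)) volume r s :=
        (continuousOn_const.mul ((hP'cont.mono (hsub r s hr0 hs0)).sub
          continuousOn_const)).intervalIntegrable
      calc |∫ t in r..s, (deriv p t - deriv p r)|
          ≤ ∫ t in r..s, |deriv p t - deriv p r| :=
            intervalIntegral.abs_integral_le_integral_abs hc
        _ ≤ ∫ t in r..s, M/m * (deriv P t - deriv P r) := by
            apply intervalIntegral.integral_mono_on hc i1 i2
            intro t ht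
            exact hkey r t hrm.1 ht.1 (le_trans ht.2 h2)
        _ = M/m * ∫ t in r..s, (deriv P t - deriv P r) := by
            rw [intervalIntegral.integral_const_mul]
    · have i1 : IntervalIntegrable (fun t => |deriv p t - deriv p r|) volume s r :=
        (((hp'cont.mono (hsub s r hs0 hr0)).sub continuousOn_const).abs).intervalIntegrable
      have i2 : IntervalIntegrable (fun t => M/m * (deriv P r - deriv P t)) volume s r :=
        (continuousOn_const.mul (continuousOn_const.sub
          (hP'cont.mono (hsub s r hs0 hr0)))).intervalIntegrable
      have e1 : ∫ t in r..s, (deriv p t - deriv p r)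
          = -∫ t in s..r, (deriv p t - deriv p r) :=
        intervalIntegral.integral_symm s r
      have e2 : ∫ t in r..s, (deriv P t - deriv P r)
          = ∫ t in s..r, (deriv P r - deriv P t) := by
        rw [intervalIntegral.integral_symm s r, ← intervalIntegral.integral_neg]
        congr 1
        funext t
        ring
      rw [e1, e2, abs_neg]
      calc |∫ t in s..r, (deriv p t - deriv p r)|
          ≤ ∫ t in s..r, |deriv p t - deriv p r| :=
            intervalIntegral.abs_integral_le_integral_abs hc
        _ ≤ ∫ t in s..r, M/m * (deriv P r - deriv P t) := by
            apply intervalIntegral.integral_mono_on hc i1 i2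
            intro t ht
            have := hkey t r (le_trans h1 ht.1) ht.2 hrm.2
            rwa [abs_sub_comm] at this
        _ = M/m * ∫ t in s..r, (deriv P r - deriv P t) := by
            rw [intervalIntegral.integral_const_mul]
  -- final assembly
  refine ⟨max (M₁/δ) (max (2/β) (M/m)), ?_, ?_⟩
  · exact lt_of_lt_of_le (by positivity : (0:ℝ) < 2/β)
      ((le_max_left _ _).trans (le_max_right _ _))
  · intro r hr s hs
    have hE0 : 0 ≤ P s - deriv P r * (s - r) - P r := hEnonneg r hr s hs
    rcases le_or_gt s (a/2) with h | h
    · have hr0 : 0 < r := lt_of_lt_of_le ha hr.1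
      have h1 : |p s - deriv p r * (s - r) - p r| ≤ M₁ := by
        have e1 : |p s| ≤ Cp0 := hCp0 s ⟨hs.le, by linarith⟩
        have e2 : |s - r| ≤ b := by
          rw [abs_of_nonpos (by linarith [hr.1] : s - r ≤ 0)]
          have := hr.2
          linarith
        have e3 : |deriv p r| * |s - r| ≤ Cp' * b :=
          mul_le_mul (hCp' r hr) e2 (abs_nonneg _) hCp'n
        calc |p s - deriv p r * (s - r) - p r|
            ≤ |p s - deriv p r * (s - r)| + |p r| := abs_sub _ _
          _ ≤ (|p s| + |deriv p r * (s - r)|) + |p r| := by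
              linarith [abs_sub (p s) (deriv p r * (s - r))]
          _ = |p s| + |deriv p r| * |s - r| + |p r| := by rw [abs_mul]
          _ ≤ Cp0 + Cp' * b + Cp := by linarith [hCp r hr]
          _ = M₁ := hM₁def.symm
      have h2 : δ ≤ P s - deriv P r * (s - r) - P r := key_small r hr s hs h
      calc |p s - deriv p r * (s - r) - p r| ≤ M₁ := h1
        _ = M₁/δ * δ := (div_mul_cancel₀ M₁ (ne_of_gt hδpos)).symm
        _ ≤ M₁/δ * (P s - deriv P r * (s - r) - P r) :=
            mul_le_mul_of_nonneg_left h2 (div_nonneg hM₁n hδpos.le)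
        _ ≤ max (M₁/δ) (max (2/β) (M/m)) * (P s - deriv P r * (s - r) - P r) :=
            mul_le_mul_of_nonneg_right (le_max_left _ _) hE0
    rcases le_or_gt s S with h' | h'
    · exact le_trans (key_mid r hr s h.le h')
        (mul_le_mul_of_nonneg_right
          ((le_max_right (2/β) (M/m)).trans (le_max_right _ _)) hE0)
    · exact le_trans (key_large r hr s h'.le)
        (mul_le_mul_of_nonneg_right
          ((le_max_left (2/β) (M/m)).trans (le_max_right _ _)) hE0)
end

section
/- Let N ≥ 1 and let p : (0,∞) → ℝ be continuously differentiable with p′(z) > 0 for all z > 0 and p′(z) ≥ α > 0 for all z ≥ z₀, for some z₀ > 0. Let 0 < a ≤ b. Then there exists a constant c > 0 such that for every r ∈ [a, b] and every Borel probability measure ν on (0,∞) × ℝ^N for which the functions (s,v) ↦ s and (s,v) ↦ P(s) − P′(r)(s − r) − P(r) are ν-integrable, one has ∫ |s − r| dν(s,v) ≤ c ( ∫ (P(s) − P′(r)(s − r) − P(r)) dν(s,v) )^{1/2} ( 1 + ∫ s dν(s,v) )^{1/2}. -/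
set_option maxHeartbeats 1000000

open MeasureTheory intervalIntegral

lemma my_integral_CS {X : Type*} [MeasurableSpace X] (μ : Measure X) (f g : X → ℝ)
    (hf0 : ∀ᵐ x ∂μ, 0 ≤ f x) (hg0 : ∀ᵐ x ∂μ, 0 ≤ g x)
    (hf2 : Integrable (fun x => f x ^ 2) μ) (hg2 : Integrable (fun x => g x ^ 2) μ)
    (hfg : Integrable (fun x => f x * g x) μ) :
    ∫ x, f x * g x ∂μ ≤ Real.sqrt (∫ x, f x ^ 2 ∂μ) * Real.sqrt (∫ x, g x ^ 2 ∂μ) := by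
  set A := ∫ x, f x ^ 2 ∂μ with hA
  set B := ∫ x, g x ^ 2 ∂μ with hB
  have hA0 : 0 ≤ A := integral_nonneg fun x => sq_nonneg _
  have hB0 : 0 ≤ B := integral_nonneg fun x => sq_nonneg _
  rcases eq_or_lt_of_le hA0 with hAz | hApos
  · have hfz : (fun x => f x ^ 2) =ᵐ[μ] 0 := by
      rw [← integral_eq_zero_iff_of_nonneg_ae (Filter.Eventually.of_forall fun x => sq_nonneg _) hf2]
      exact hAz.symm
    have hz : (fun x => f x * g x) =ᵐ[μ] 0 := by
      filter_upwards [hfz] with x hx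
      have hx' : f x ^ 2 = 0 := hx
      have hfx : f x = 0 := by nlinarith [sq_nonneg (f x)]
      simp only [Pi.zero_apply, hfx, zero_mul]
    rw [integral_congr_ae hz]
    simp only [Pi.zero_apply, MeasureTheory.integral_zero, MeasureTheory.integral_const, smul_eq_mul, mul_zero]
    positivity
  rcases eq_or_lt_of_le hB0 with hBz | hBpos
  · have hgz : (fun x => g x ^ 2) =ᵐ[μ] 0 := by
      rw [← integral_eq_zero_iff_of_nonneg_ae (Filter.Eventually.of_forall fun x => sq_nonneg _) hg2]
      exact hBz.symm
    have hz : (fun x => f x * g x) =ᵐ[μ] 0 := by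
      filter_upwards [hgz] with x hx
      have hx' : g x ^ 2 = 0 := hx
      have hgx : g x = 0 := by nlinarith [sq_nonneg (g x)]
      simp only [Pi.zero_apply, hgx, mul_zero]
    rw [integral_congr_ae hz]
    simp only [Pi.zero_apply, MeasureTheory.integral_zero, MeasureTheory.integral_const, smul_eq_mul, mul_zero]
    positivity
  set t := Real.sqrt (B / A) with ht
  have htpos : 0 < t := Real.sqrt_pos.mpr (div_pos hBpos hApos)
  have hpt : ∀ᵐ x ∂μ, f x * g x ≤ t / 2 * f x ^ 2 + 1 / (2 * t) * g x ^ 2 := by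
    filter_upwards [hf0, hg0] with x _ _
    have key : 2 * t * (f x * g x) ≤ t ^ 2 * f x ^ 2 + g x ^ 2 := by
      nlinarith [sq_nonneg (t * f x - g x)]
    have h2t : (0:ℝ) < 2 * t := by linarith
    rw [show t / 2 * f x ^ 2 + 1 / (2 * t) * g x ^ 2
        = (t ^ 2 * f x ^ 2 + g x ^ 2) / (2 * t) by field_simp]
    rw [le_div_iff₀ h2t]
    linarith [key]
  have h1 : ∫ x, f x * g x ∂μ ≤ t / 2 * A + 1 / (2 * t) * B := by
    calc ∫ x, f x * g x ∂μ ≤ ∫ x, (t / 2 * f x ^ 2 + 1 / (2 * t) * g x ^ 2) ∂μ :=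
          integral_mono_ae hfg ((hf2.const_mul _).add (hg2.const_mul _)) hpt
      _ = t / 2 * A + 1 / (2 * t) * B := by
          rw [integral_add (hf2.const_mul _) (hg2.const_mul _), MeasureTheory.integral_const_mul,
            MeasureTheory.integral_const_mul]
  have hsA : Real.sqrt A ^ 2 = A := Real.sq_sqrt hA0
  have hsB : Real.sqrt B ^ 2 = B := Real.sq_sqrt hB0
  have hsApos : 0 < Real.sqrt A := Real.sqrt_pos.mpr hApos
  have hsBpos : 0 < Real.sqrt B := Real.sqrt_pos.mpr hBpos
  have htq : t = Real.sqrt B / Real.sqrt A := by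
    rw [ht, Real.sqrt_div hB0 A]
  have hkey : t / 2 * A + 1 / (2 * t) * B = Real.sqrt A * Real.sqrt B := by
    rw [htq]
    field_simp
    linear_combination (A - 2*(Real.sqrt A)^2) * hsB - B * hsA
  linarith [h1, hkey.le]


set_option maxHeartbeats 1000000 in
/-- With `p` C¹ on `(0,∞)`, `p′ > 0`, `p′(z) ≥ α > 0` for `z ≥ z₀`,
`P(ρ) = ρ ∫₁^ρ p(z)/z² dz`, and `0 < a ≤ b`, there is `c > 0` so that for every `r ∈ [a,b]`
and every Borel probability measure `ν` on `(0,∞) × ℝ^N` with the relevant integrability,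
`∫ |s−r| dν ≤ c (∫ (P(s)−P′(r)(s−r)−P(r)) dν)^{1/2} (1 + ∫ s dν)^{1/2}`. -/
theorem stmt16 (N : ℕ) (hN : 1 ≤ N) (p P : ℝ → ℝ)
    (hp : ContDiffOn ℝ 1 p (Set.Ioi 0))
    (hp' : ∀ z : ℝ, 0 < z → 0 < deriv p z)
    (z₀ α : ℝ) (hz₀ : 0 < z₀) (hα : 0 < α)
    (hp'α : ∀ z : ℝ, z₀ ≤ z → α ≤ deriv p z)
    (hP : ∀ ρ : ℝ, P ρ = ρ * ∫ z in (1 : ℝ)..ρ, p z / z ^ 2)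
    (a b : ℝ) (ha : 0 < a) (hab : a ≤ b) :
    ∃ c : ℝ, 0 < c ∧ ∀ r ∈ Set.Icc a b,
      ∀ ν : MeasureTheory.Measure (ℝ × EuclideanSpace ℝ (Fin N)),
        IsProbabilityMeasure ν →
        (∀ᵐ q ∂ν, 0 < q.1) →
        Integrable (fun q : ℝ × EuclideanSpace ℝ (Fin N) => q.1) ν →
        Integrable (fun q : ℝ × EuclideanSpace ℝ (Fin N) =>
          P q.1 - deriv P r * (q.1 - r) - P r) ν →
        (∫ q, |q.1 - r| ∂ν)
          ≤ c * Real.sqrt (∫ q, (P q.1 - deriv P r * (q.1 - r) - P r) ∂ν)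
            * Real.sqrt (1 + ∫ q, q.1 ∂ν) := by
  have hb : 0 < b := lt_of_lt_of_le ha hab
  set F : ℝ → ℝ := fun ρ => ∫ z in (1 : ℝ)..ρ, p z / z ^ 2 with hFdef
  set G : ℝ → ℝ := fun ρ => F ρ + p ρ / ρ with hGdef
  have hpc : ContinuousOn p (Set.Ioi 0) := hp.continuousOn
  have hp'c : ContinuousOn (deriv p) (Set.Ioi 0) :=
    hp.continuousOn_deriv_of_isOpen isOpen_Ioi le_rfl
  have hpd : ∀ ρ : ℝ, 0 < ρ → HasDerivAt p (deriv p ρ) ρ := fun ρ hρ =>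
    ((hp.differentiableOn one_ne_zero).differentiableAt (isOpen_Ioi.mem_nhds hρ)).hasDerivAt
  have hic : ContinuousOn (fun z : ℝ => p z / z ^ 2) (Set.Ioi 0) := by
    apply hpc.div ((continuous_pow 2).continuousOn)
    intro z hz
    have : (0:ℝ) < z := hz
    positivity
  have hFd : ∀ ρ : ℝ, 0 < ρ → HasDerivAt F (p ρ / ρ ^ 2) ρ := by
    intro ρ hρ
    apply intervalIntegral.integral_hasDerivAt_right
    · apply ContinuousOn.intervalIntegrable
      apply hic.mono
      intro x hx
      rcases Set.mem_uIcc.mp hx with ⟨h1, _⟩ | ⟨h1, _⟩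
      · exact lt_of_lt_of_le one_pos h1
      · exact lt_of_lt_of_le hρ h1
    · exact ⟨Set.Ioi 0, isOpen_Ioi.mem_nhds hρ,
        hic.aestronglyMeasurable measurableSet_Ioi⟩
    · exact hic.continuousAt (isOpen_Ioi.mem_nhds hρ)
  have hPd : ∀ ρ : ℝ, 0 < ρ → HasDerivAt P (G ρ) ρ := by
    intro ρ hρ
    have hPeq : P = fun ρ => ρ * F ρ := funext hP
    rw [hPeq]
    have h1 : HasDerivAt (fun x => x * F x) (1 * F ρ + ρ * (p ρ / ρ ^ 2)) ρ :=
      (hasDerivAt_id ρ).mul (hFd ρ hρ)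
    convert h1 using 1
    rw [hGdef]
    field_simp
  have hGd : ∀ ρ : ℝ, 0 < ρ → HasDerivAt G (deriv p ρ / ρ) ρ := by
    intro ρ hρ
    have h2 : HasDerivAt (fun x => p x / x) ((deriv p ρ * ρ - p ρ * 1) / ρ ^ 2) ρ :=
      (hpd ρ hρ).div (hasDerivAt_id ρ) hρ.ne'
    have h3 := (hFd ρ hρ).add h2
    refine h3.congr_deriv ?_
    field_simp
    ring
  have hGc : ContinuousOn G (Set.Ioi 0) := fun x hx =>
    ((hGd x hx).continuousAt).continuousWithinAt
  have hGmono : StrictMonoOn G (Set.Ioi 0) := by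
    apply strictMonoOn_of_deriv_pos (convex_Ioi 0) hGc
    intro x hx
    rw [interior_Ioi] at hx
    rw [(hGd x hx).deriv]
    exact div_pos (hp' x hx) hx
  -- the minimum m of deriv p t / t on [a/2, 4b]
  have hKsub : Set.Icc (a/2) (4*b) ⊆ Set.Ioi 0 := fun x hx =>
    lt_of_lt_of_le (by positivity) hx.1
  have hKne : (Set.Icc (a/2) (4*b)).Nonempty := ⟨a/2, le_refl _, by nlinarith⟩
  obtain ⟨t₀, ht₀K, ht₀min⟩ := isCompact_Icc.exists_isMinOn hKne
    (((hp'c.mono hKsub).div continuousOn_id) fun x hx => (lt_of_lt_of_le (by positivity : (0:ℝ) < a/2) hx.1).ne')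
  set m := deriv p t₀ / t₀ with hmdef
  have ht₀pos : 0 < t₀ := hKsub ht₀K
  have hm : 0 < m := div_pos (hp' t₀ ht₀pos) ht₀pos
  have hmmin : ∀ x ∈ Set.Icc (a/2) (4*b), m ≤ deriv p x / x := fun x hx => ht₀min hx
  -- constants
  set δ₀ := G (4*b) - G b with hδ₀def
  have hδ₀ : 0 < δ₀ := by
    have h4b : (0:ℝ) < 4*b := by linarith
    have := hGmono (Set.mem_Ioi.mpr hb) (Set.mem_Ioi.mpr h4b) (show b < 4*b by linarith)
    simp only [hδ₀def, sub_pos]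
    exact this
  set ε₁ := m/2 * (a/2)^2 with hε₁def
  set ε₂ := m/2 * (3*b)^2 with hε₂def
  have hε₁ : 0 < ε₁ := by positivity
  have hε₂ : 0 < ε₂ := by positivity
  set c₂ := min (ε₁ / (1 + a/2)) (min (ε₂ / (1 + 4*b)) δ₀) with hc₂def
  have hc₂ : 0 < c₂ := by
    apply lt_min (by positivity) (lt_min (by positivity) hδ₀)
  set K₀ := max (Real.sqrt (2/m)) ((1+b) / Real.sqrt c₂) with hK₀def
  have hK₀ : 0 < K₀ := lt_of_lt_of_le (Real.sqrt_pos.mpr (by positivity)) (le_max_left _ _)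
  have hK₁ : Real.sqrt (2/m) ≤ K₀ := le_max_left _ _
  have hK₂ : (1+b)/Real.sqrt c₂ ≤ K₀ := le_max_right _ _
  have hc₂a : c₂ ≤ ε₁ / (1 + a/2) := min_le_left _ _
  have hc₂b : c₂ ≤ ε₂ / (1 + 4*b) := le_trans (min_le_right _ _) (min_le_left _ _)
  have hc₂c : c₂ ≤ δ₀ := le_trans (min_le_right _ _) (min_le_right _ _)
  clear_value m δ₀ ε₁ ε₂ c₂ K₀
  refine ⟨K₀, hK₀, ?_⟩
  intro r hr ν hprob hpos hint_s hint_E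
  obtain ⟨har, hrb⟩ := hr
  have hr0 : 0 < r := lt_of_lt_of_le ha har
  -- E and its derivative
  set E : ℝ → ℝ := fun s => P s - G r * (s - r) - P r with hEdef
  have hdP : deriv P r = G r := (hPd r hr0).deriv
  have hEd : ∀ s : ℝ, 0 < s → HasDerivAt E (G s - G r) s := by
    intro s hs
    have h1 : HasDerivAt (fun s : ℝ => G r * (s - r)) (G r * 1) s :=
      (((hasDerivAt_id s).sub_const r)).const_mul (G r)
    have := ((hPd s hs).sub h1).sub_const (P r)
    simpa [hEdef] using this
  have hEr : E r = 0 := by simp [hEdef]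
  have hEc : ContinuousOn E (Set.Ioi 0) := fun x hx =>
    ((hEd x hx).continuousAt).continuousWithinAt
  clear_value E
  -- Claim 1: essential region
  have hrK : r ∈ Set.Icc (a/2) (4*b) := ⟨by linarith, by linarith⟩
  have claim1 : ∀ s ∈ Set.Icc (a/2) (4*b), m/2 * (s - r)^2 ≤ E s := by
    set φ : ℝ → ℝ := fun s => G s - G r - m * (s - r) with hφdef
    have hφd : ∀ s : ℝ, 0 < s → HasDerivAt φ (deriv p s / s - m) s := by
      intro s hs
      have h1 : HasDerivAt (fun s : ℝ => G r + m * (s - r)) (m * 1) s :=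
        (((hasDerivAt_id s).sub_const r).const_mul m).const_add (G r)
      have h2 := (hGd s hs).sub h1
      have heq : φ = fun s => G s - (G r + m * (s - r)) := by
        funext x; simp only [hφdef]; ring
      rw [heq]
      refine h2.congr_deriv ?_
      ring
    clear_value φ
    have hhd : ∀ s : ℝ, 0 < s → HasDerivAt (fun s => E s - m/2 * (s - r)^2) (φ s) s := by
      intro s hs
      have h1 : HasDerivAt (fun s : ℝ => m/2 * (s - r)^2)
          (m/2 * ((2:ℕ) * (s - r)^(2-1) * 1)) s :=
        (((hasDerivAt_id s).sub_const r).pow 2).const_mul (m/2)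
      have h2 := (hEd s hs).sub h1
      refine h2.congr_deriv ?_
      simp only [hφdef]
      push_cast
      ring
    have hφmono : MonotoneOn φ (Set.Icc (a/2) (4*b)) := by
      apply monotoneOn_of_deriv_nonneg (convex_Icc _ _)
      · exact fun x hx => ((hφd x (hKsub hx)).continuousAt).continuousWithinAt
      · intro x hx
        rw [interior_Icc] at hx
        exact ((hφd x (hKsub (Set.Ioo_subset_Icc_self hx))).differentiableAt).differentiableWithinAt
      · intro x hx
        rw [interior_Icc] at hx
        rw [(hφd x (hKsub (Set.Ioo_subset_Icc_self hx))).deriv]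
        have := hmmin x (Set.Ioo_subset_Icc_self hx)
        linarith
    have hφr : φ r = 0 := by simp [hφdef]
    intro s hs
    have hs0 : 0 < s := hKsub hs
    have key : 0 ≤ E s - m/2 * (s - r)^2 := by
      have hhr : E r - m/2 * (r - r)^2 = 0 := by rw [hEr]; ring
      rcases le_total s r with hsr | hsr
      · have hanti : AntitoneOn (fun s => E s - m/2 * (s - r)^2) (Set.Icc (a/2) r) := by
          apply antitoneOn_of_deriv_nonpos (convex_Icc _ _)
          · exact fun x hx =>
              ((hhd x (lt_of_lt_of_le (by positivity) hx.1)).continuousAt).continuousWithinAt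
          · intro x hx
            rw [interior_Icc] at hx
            have hx0 : 0 < x := by linarith [hx.1]
            exact ((hhd x hx0).differentiableAt).differentiableWithinAt
          · intro x hx
            rw [interior_Icc] at hx
            have hx0 : 0 < x := by linarith [hx.1]
            rw [(hhd x hx0).deriv]
            have hxK : x ∈ Set.Icc (a/2) (4*b) := ⟨hx.1.le, by linarith [hx.2]⟩
            have := hφmono hxK hrK hx.2.le
            rw [hφr] at this
            exact this
        have h7 := hanti ⟨hs.1, hsr⟩ ⟨by linarith, le_refl r⟩ hsr
        simp only [hEr] at h7
        linarith [h7]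
      · have hmono : MonotoneOn (fun s => E s - m/2 * (s - r)^2) (Set.Icc r (4*b)) := by
          apply monotoneOn_of_deriv_nonneg (convex_Icc _ _)
          · exact fun x hx =>
              ((hhd x (lt_of_lt_of_le hr0 hx.1)).continuousAt).continuousWithinAt
          · intro x hx
            rw [interior_Icc] at hx
            exact ((hhd x (hr0.trans hx.1)).differentiableAt).differentiableWithinAt
          · intro x hx
            rw [interior_Icc] at hx
            rw [(hhd x (hr0.trans hx.1)).deriv]
            have hxK : x ∈ Set.Icc (a/2) (4*b) := ⟨by linarith [hx.1], hx.2.le⟩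
            have := hφmono hrK hxK hx.1.le
            rw [hφr] at this
            exact this
        have h7 := hmono ⟨le_refl r, by linarith⟩ ⟨hsr, hs.2⟩ hsr
        simp only [hEr] at h7
        linarith [h7]
    linarith
  -- Claim 2: s < a/2
  have claim2 : ∀ s : ℝ, 0 < s → s < a/2 → ε₁ ≤ E s := by
    intro s hs hsa
    have hanti : AntitoneOn E (Set.Ioc 0 r) := by
      apply antitoneOn_of_deriv_nonpos (convex_Ioc _ _)
      · exact fun x hx => ((hEd x hx.1).continuousAt).continuousWithinAt
      · intro x hx
        rw [interior_Ioc] at hx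
        exact ((hEd x hx.1).differentiableAt).differentiableWithinAt
      · intro x hx
        rw [interior_Ioc] at hx
        rw [(hEd x hx.1).deriv]
        have := hGmono (Set.mem_Ioi.mpr hx.1) (Set.mem_Ioi.mpr hr0) hx.2
        linarith
    have h1 : E (a/2) ≤ E s :=
      hanti ⟨hs, by linarith⟩ ⟨by positivity, by linarith⟩ (by linarith)
    have h2 := claim1 (a/2) ⟨le_refl _, by linarith⟩
    have h3 : ε₁ ≤ m/2 * (a/2 - r)^2 := by
      rw [hε₁def]
      nlinarith [mul_nonneg (mul_nonneg hm.le hr0.le) (sub_nonneg.mpr har)]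
    linarith
  -- Claim 3: s > 4b
  have claim3 : ∀ s : ℝ, 4*b < s → ε₂ + δ₀ * (s - 4*b) ≤ E s := by
    intro s hs4
    have h4b : (0:ℝ) < 4*b := by linarith
    have hkd : ∀ x : ℝ, 0 < x → HasDerivAt (fun x => E x - δ₀ * (x - 4*b)) (G x - G r - δ₀) x := by
      intro x hx
      have h1 : HasDerivAt (fun x : ℝ => δ₀ * (x - 4*b)) (δ₀ * 1) x :=
        ((hasDerivAt_id x).sub_const _).const_mul δ₀
      have h2 := (hEd x hx).sub h1
      refine h2.congr_deriv ?_
      ring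
    have hkmono : MonotoneOn (fun x => E x - δ₀ * (x - 4*b)) (Set.Ici (4*b)) := by
      apply monotoneOn_of_deriv_nonneg (convex_Ici _)
      · exact fun x hx =>
          ((hkd x (lt_of_lt_of_le h4b hx)).continuousAt).continuousWithinAt
      · intro x hx
        rw [interior_Ici] at hx
        have hx0 : 0 < x := lt_trans h4b hx
        exact ((hkd x hx0).differentiableAt).differentiableWithinAt
      · intro x hx
        rw [interior_Ici] at hx
        have hx4 : 4*b < x := hx
        have hx0 : 0 < x := lt_trans h4b hx4
        rw [(hkd x hx0).deriv]
        have e1 : G (4*b) ≤ G x :=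
          (hGmono (Set.mem_Ioi.mpr h4b) (Set.mem_Ioi.mpr hx0) hx4).le
        have e2 : G r ≤ G b :=
          hGmono.monotoneOn (Set.mem_Ioi.mpr hr0) (Set.mem_Ioi.mpr hb) hrb
        rw [hδ₀def]
        linarith
    have hk : E (4*b) - δ₀ * (4*b - 4*b) ≤ E s - δ₀ * (s - 4*b) :=
      hkmono (Set.mem_Ici.mpr le_rfl) (Set.mem_Ici.mpr hs4.le) hs4.le
    have h2 := claim1 (4*b) ⟨by linarith, le_refl _⟩
    have h3 : ε₂ ≤ m/2 * (4*b - r)^2 := by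
      rw [hε₂def]
      nlinarith [mul_nonneg (mul_nonneg hm.le (sub_nonneg.mpr hrb))
        (show (0:ℝ) ≤ 7*b - r by linarith)]
    have h5 : δ₀ * (4*b - 4*b) = 0 := by ring
    linarith
  -- residual bound
  have claimres : ∀ s : ℝ, 0 < s → s ∉ Set.Icc (a/2) (4*b) → c₂ * (1 + s) ≤ E s := by
    intro s hs hsK
    rw [Set.mem_Icc, not_and_or] at hsK
    rcases hsK with h | h
    · push_neg at h
      have h1 := claim2 s hs h
      have h2 : c₂ ≤ ε₁ / (1 + a/2) := hc₂a
      have h3 : (0:ℝ) < 1 + a/2 := by positivity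
      have h4 : c₂ * (1 + a/2) ≤ ε₁ := by
        rw [← le_div_iff₀ h3]; exact h2
      have h5 : c₂ * (1 + s) ≤ c₂ * (1 + a/2) :=
        mul_le_mul_of_nonneg_left (by linarith) hc₂.le
      linarith
    · push_neg at h
      have h1 := claim3 s h
      have h2 : c₂ ≤ ε₂ / (1 + 4*b) := hc₂b
      have h2' : c₂ ≤ δ₀ := hc₂c
      have h3 : (0:ℝ) < 1 + 4*b := by positivity
      have h4 : c₂ * (1 + 4*b) ≤ ε₂ := by rw [← le_div_iff₀ h3]; exact h2
      have h5 : c₂ * (s - 4*b) ≤ δ₀ * (s - 4*b) :=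
        mul_le_mul_of_nonneg_right h2' (by linarith)
      have e1 : c₂ * (1 + s) = c₂ * (1 + 4*b) + c₂ * (s - 4*b) := by ring
      linarith
  -- nonnegativity of E on (0,∞)
  have hEnonneg : ∀ s : ℝ, 0 < s → 0 ≤ E s := by
    intro s hs
    by_cases hsK : s ∈ Set.Icc (a/2) (4*b)
    · have h1 := claim1 s hsK
      have h2 : 0 ≤ m/2 * (s - r)^2 := by positivity
      exact le_trans h2 h1
    · have h1 := claimres s hs hsK
      have h2 : 0 ≤ c₂ * (1 + s) := mul_nonneg hc₂.le (by linarith)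
      exact le_trans h2 h1
  -- pointwise bound
  have hpoint : ∀ s : ℝ, 0 < s →
      |s - r| ≤ K₀ * Real.sqrt (E s) * Real.sqrt (1 + s) := by
    intro s hs
    have hE0 := hEnonneg s hs
    have h1s : (0:ℝ) ≤ 1 + s := by linarith
    have hsq1 : (1:ℝ) ≤ Real.sqrt (1 + s) := by
      nlinarith [Real.sq_sqrt h1s, Real.sqrt_nonneg (1 + s)]
    by_cases hsK : s ∈ Set.Icc (a/2) (4*b)
    · have h1 := claim1 s hsK
      have h2 : |s - r| ≤ Real.sqrt (2/m) * Real.sqrt (E s) := by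
        rw [← Real.sqrt_mul (by positivity) (E s),
          show |s - r| = Real.sqrt ((s-r)^2) from (Real.sqrt_sq_eq_abs _).symm]
        apply Real.sqrt_le_sqrt
        rw [div_mul_eq_mul_div, le_div_iff₀ hm]
        linarith
      calc |s - r| ≤ Real.sqrt (2/m) * Real.sqrt (E s) := h2
        _ ≤ K₀ * Real.sqrt (E s) :=
            mul_le_mul_of_nonneg_right hK₁ (Real.sqrt_nonneg _)
        _ = K₀ * Real.sqrt (E s) * 1 := by ring
        _ ≤ K₀ * Real.sqrt (E s) * Real.sqrt (1 + s) := by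
            apply mul_le_mul_of_nonneg_left hsq1
            positivity
    · have h1 := claimres s hs hsK
      have h2 : |s - r| ≤ (1+b) * (1+s) := by
        rw [abs_le]
        constructor <;> nlinarith
      have h3 : Real.sqrt c₂ * Real.sqrt (1+s) ≤ Real.sqrt (E s) := by
        rw [← Real.sqrt_mul hc₂.le]
        exact Real.sqrt_le_sqrt h1
      have hscpos : 0 < Real.sqrt c₂ := Real.sqrt_pos.mpr hc₂
      have h4 : (1+b) ≤ K₀ * Real.sqrt c₂ := by
        have h5 := hK₂
        rw [div_le_iff₀ hscpos] at h5
        exact h5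
      have hsq : Real.sqrt (1+s) ^ 2 = 1 + s := Real.sq_sqrt h1s
      calc |s - r| ≤ (1+b) * (1+s) := h2
        _ ≤ (K₀ * Real.sqrt c₂) * (1+s) := mul_le_mul_of_nonneg_right h4 h1s
        _ = K₀ * (Real.sqrt c₂ * Real.sqrt (1+s)) * Real.sqrt (1+s) := by
            conv_lhs => rw [← Real.mul_self_sqrt h1s]
            ring
        _ ≤ K₀ * Real.sqrt (E s) * Real.sqrt (1+s) := by
            apply mul_le_mul_of_nonneg_right _ (Real.sqrt_nonneg _)
            exact mul_le_mul_of_nonneg_left h3 hK₀.le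
  -- integral part
  rw [hdP] at hint_E ⊢
  have hint_E2 : Integrable (fun q : ℝ × EuclideanSpace ℝ (Fin N) => E q.1) ν := by
    simpa only [hEdef] using hint_E
  have hint_1s : Integrable (fun q : ℝ × EuclideanSpace ℝ (Fin N) => 1 + q.1) ν :=
    (integrable_const 1).add hint_s
  set f : ℝ × EuclideanSpace ℝ (Fin N) → ℝ := fun q => Real.sqrt (E q.1) with hfdef
  set g : ℝ × EuclideanSpace ℝ (Fin N) → ℝ := fun q => Real.sqrt (1 + q.1) with hgdef
  have hf_m : AEStronglyMeasurable f ν :=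
    Real.continuous_sqrt.comp_aestronglyMeasurable hint_E2.aestronglyMeasurable
  have hg_m : AEStronglyMeasurable g ν :=
    Real.continuous_sqrt.comp_aestronglyMeasurable hint_1s.aestronglyMeasurable
  have hEf : (fun q : ℝ × EuclideanSpace ℝ (Fin N) => f q ^ 2) =ᵐ[ν]
      (fun q => E q.1) := by
    filter_upwards [hpos] with q hq
    exact Real.sq_sqrt (hEnonneg _ hq)
  have hgf : (fun q : ℝ × EuclideanSpace ℝ (Fin N) => g q ^ 2) =ᵐ[ν]
      (fun q => 1 + q.1) := by
    filter_upwards [hpos] with q hq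
    exact Real.sq_sqrt (by linarith)
  have hfnn : ∀ q, 0 ≤ f q := fun q => Real.sqrt_nonneg _
  have hgnn : ∀ q, 0 ≤ g q := fun q => Real.sqrt_nonneg _
  clear_value f g
  have hf2 : Integrable (fun q => f q ^ 2) ν := hint_E2.congr hEf.symm
  have hg2 : Integrable (fun q => g q ^ 2) ν := hint_1s.congr hgf.symm
  have hfg : Integrable (fun q => f q * g q) ν := by
    refine Integrable.mono' ((hf2.add hg2).const_mul (1/2)) (hf_m.mul hg_m) ?_
    refine Filter.Eventually.of_forall fun q => ?_
    have h0f : 0 ≤ f q := hfnn q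
    have h0g : 0 ≤ g q := hgnn q
    rw [Real.norm_eq_abs, abs_of_nonneg (mul_nonneg h0f h0g)]
    simp only [Pi.add_apply]
    nlinarith [sq_nonneg (f q - g q)]
  have hCS := my_integral_CS ν f g (Filter.Eventually.of_forall hfnn)
    (Filter.Eventually.of_forall hgnn) hf2 hg2 hfg
  rw [integral_congr_ae hEf, integral_congr_ae hgf] at hCS
  have habs : Integrable (fun q : ℝ × EuclideanSpace ℝ (Fin N) => |q.1 - r|) ν :=
    (hint_s.sub (integrable_const r)).abs
  have hmono : ∫ q, |q.1 - r| ∂ν ≤ ∫ q, K₀ * (f q * g q) ∂ν := by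
    apply integral_mono_ae habs (hfg.const_mul K₀)
    filter_upwards [hpos] with q hq
    simpa [hfdef, hgdef, mul_assoc] using hpoint q.1 hq
  have hsum : ∫ q, (1 + q.1) ∂ν = 1 + ∫ q, q.1 ∂ν := by
    rw [integral_add (integrable_const 1) hint_s, MeasureTheory.integral_const]
    simp
  have goal2 : (∫ q, |q.1 - r| ∂ν)
      ≤ K₀ * Real.sqrt (∫ q, E q.1 ∂ν) * Real.sqrt (1 + ∫ q, q.1 ∂ν) := by
    calc (∫ q, |q.1 - r| ∂ν) ≤ ∫ q, K₀ * (f q * g q) ∂ν := hmono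
      _ = K₀ * ∫ q, f q * g q ∂ν := integral_const_mul K₀ _
      _ ≤ K₀ * (Real.sqrt (∫ q, E q.1 ∂ν) * Real.sqrt (1 + ∫ q, q.1 ∂ν)) := by
          rw [← hsum]
          exact mul_le_mul_of_nonneg_left hCS hK₀.le
      _ = K₀ * Real.sqrt (∫ q, E q.1 ∂ν) * Real.sqrt (1 + ∫ q, q.1 ∂ν) := by ring
  simpa only [hEdef] using goal2
end

section
/- Let (X, μ) be a finite measure space, let f_n : X → [0,∞) be measurable with sup_n ∫_X ( (f_n + 1) log(f_n + 1) − f_n ) dμ ≤ C for some constant C < ∞, and let g_n : X → ℝ be measurable with |g_n| ≤ M μ-a.e. for some constant M and g_n → 0 μ-a.e. Then ∫_X f_n g_n dμ → 0 as n → ∞. -/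
open MeasureTheory

/-- Young-type inequality: `a * t ≤ Φ(a) + Ψ(t)` with `Φ(a) = (a+1)log(a+1) - a`,
`Ψ(t) = e^t - t - 1`. -/
lemma young_ineq (a t : ℝ) (ha : 0 ≤ a) :
    a * t ≤ ((a + 1) * Real.log (a + 1) - a) + (Real.exp t - t - 1) := by
  have h1 : (0:ℝ) < a + 1 := by linarith
  have h2 : Real.exp (Real.log (a + 1)) = a + 1 := Real.exp_log h1
  have h3 : t - Real.log (a + 1) + 1 ≤ Real.exp (t - Real.log (a + 1)) :=
    Real.add_one_le_exp _
  have h4 : (a + 1) * (t - Real.log (a + 1) + 1) ≤ Real.exp t := by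
    calc (a + 1) * (t - Real.log (a + 1) + 1)
        ≤ (a + 1) * Real.exp (t - Real.log (a + 1)) :=
          mul_le_mul_of_nonneg_left h3 h1.le
      _ = Real.exp (Real.log (a + 1)) * Real.exp (t - Real.log (a + 1)) := by rw [h2]
      _ = Real.exp t := by rw [← Real.exp_add]; ring_nf
  nlinarith [h4]

/-- On a finite measure space, if `f_n ≥ 0` satisfy the uniform de la Vallée
Poussin bound `∫ ((f_n+1)log(f_n+1) − f_n) dμ ≤ C`, and `g_n` are uniformly bounded a.e.
and tend to `0` a.e., then `∫ f_n g_n dμ → 0`. -/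
theorem stmt18 {X : Type*} [MeasurableSpace X] (μ : Measure X) [IsFiniteMeasure μ]
    (f : ℕ → X → ℝ) (hfmeas : ∀ n, Measurable (f n)) (hf0 : ∀ n x, 0 ≤ f n x)
    (C : ℝ)
    (hC : ∀ n, ∫⁻ x, ENNReal.ofReal ((f n x + 1) * Real.log (f n x + 1) - f n x) ∂μ
      ≤ ENNReal.ofReal C)
    (g : ℕ → X → ℝ) (hgmeas : ∀ n, Measurable (g n))
    (M : ℝ) (hgb : ∀ n, ∀ᵐ x ∂μ, |g n x| ≤ M)
    (hg0 : ∀ᵐ x ∂μ, Filter.Tendsto (fun n => g n x) Filter.atTop (nhds 0)) :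
    Filter.Tendsto (fun n => ∫ x, f n x * g n x ∂μ) Filter.atTop (nhds 0) := by
  set C' := max C 0 with hC'def
  have hC'0 : 0 ≤ C' := le_max_right _ _
  set M' := max M 0 with hM'def
  have hM'0 : 0 ≤ M' := le_max_right _ _
  -- Φ properties (independent of ε)
  set Φ : ℕ → X → ℝ := fun n x => (f n x + 1) * Real.log (f n x + 1) - f n x with hΦdef
  have hΦmeas : ∀ n, Measurable (Φ n) := by
    intro n
    exact (((hfmeas n).add measurable_const).mul
      (((hfmeas n).add measurable_const).log)).sub (hfmeas n)
  have hΦ0 : ∀ n x, 0 ≤ Φ n x := by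
    intro n x
    have := young_ineq (f n x) 0 (hf0 n x)
    simpa [Φ, Real.exp_zero] using this
  have hΦint : ∀ n, Integrable (Φ n) μ := by
    intro n
    refine ⟨(hΦmeas n).aestronglyMeasurable, ?_⟩
    rw [hasFiniteIntegral_iff_ofReal (Filter.Eventually.of_forall (hΦ0 n))]
    exact lt_of_le_of_lt (hC n) ENNReal.ofReal_lt_top
  have hΦle : ∀ n, ∫ x, Φ n x ∂μ ≤ C' := by
    intro n
    rw [integral_eq_lintegral_of_nonneg_ae (Filter.Eventually.of_forall (hΦ0 n))
      (hΦmeas n).aestronglyMeasurable]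
    calc (∫⁻ x, ENNReal.ofReal (Φ n x) ∂μ).toReal
        ≤ (ENNReal.ofReal C).toReal := ENNReal.toReal_mono ENNReal.ofReal_ne_top (hC n)
      _ ≤ (ENNReal.ofReal C').toReal :=
          ENNReal.toReal_mono ENNReal.ofReal_ne_top
            (ENNReal.ofReal_le_ofReal (le_max_left _ _))
      _ = C' := ENNReal.toReal_ofReal hC'0
  -- ε-criterion
  rw [Metric.tendsto_atTop]
  intro ε hε
  set l := ε / (2 * (C' + 1)) with hldef
  have hl0 : 0 < l := div_pos hε (by positivity)
  set Ψ : ℕ → X → ℝ := fun n x => Real.exp (|g n x| / l) - |g n x| / l - 1 with hΨdef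
  have hΨmeas : ∀ n, Measurable (Ψ n) := by
    intro n
    exact (((hgmeas n).abs.div_const l).exp).sub ((hgmeas n).abs.div_const l) |>.sub
      measurable_const
  have hΨ0 : ∀ n x, 0 ≤ Ψ n x := by
    intro n x
    have := Real.add_one_le_exp (|g n x| / l)
    simp only [Ψ]
    linarith
  have hΨbd : ∀ n, ∀ᵐ x ∂μ, ‖Ψ n x‖ ≤ Real.exp (M' / l) := by
    intro n
    filter_upwards [hgb n] with x hx
    have h1 : |g n x| / l ≤ M' / l := by
      gcongr
      exact hx.trans (le_max_left _ _)
    have h2 : 0 ≤ |g n x| / l := div_nonneg (abs_nonneg _) hl0.le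
    rw [Real.norm_eq_abs, abs_of_nonneg (hΨ0 n x)]
    have h3 : Real.exp (|g n x| / l) ≤ Real.exp (M' / l) := Real.exp_le_exp.2 h1
    simp only [Ψ]
    linarith
  have hΨint : ∀ n, Integrable (Ψ n) μ :=
    fun n => (integrable_const (Real.exp (M' / l))).mono'
      (hΨmeas n).aestronglyMeasurable (hΨbd n)
  -- dominated convergence for Ψ
  have hΨtend : Filter.Tendsto (fun n => ∫ x, Ψ n x ∂μ) Filter.atTop (nhds 0) := by
    have h := tendsto_integral_of_dominated_convergence
      (fun _ => Real.exp (M' / l))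
      (fun n => (hΨmeas n).aestronglyMeasurable)
      (integrable_const _) hΨbd
      (F := fun n x => Ψ n x) (f := fun _ => (0:ℝ)) ?_
    · simpa using h
    · filter_upwards [hg0] with x hx
      have hcont : Continuous (fun t : ℝ => Real.exp (|t| / l) - |t| / l - 1) := by
        fun_prop
      have := (hcont.tendsto 0).comp hx
      simpa [Ψ, Function.comp_def, Real.exp_zero] using this
  obtain ⟨N, hN⟩ := (Metric.tendsto_atTop.mp hΨtend) (ε / (2 * l)) (by positivity)
  refine ⟨N, fun n hn => ?_⟩
  -- pointwise bound
  have key : ∀ x, f n x * |g n x| ≤ l * Φ n x + l * Ψ n x := by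
    intro x
    have h := young_ineq (f n x) (|g n x| / l) (hf0 n x)
    have h2 : f n x * |g n x| = l * (f n x * (|g n x| / l)) := by
      field_simp
    rw [h2]
    have := mul_le_mul_of_nonneg_left h hl0.le
    simp only [Ψ, Φ]
    linarith
  have hfgint : Integrable (fun x => f n x * g n x) μ := by
    refine ((hΦint n).const_mul l |>.add ((hΨint n).const_mul l)).mono'
      ((hfmeas n).mul (hgmeas n)).aestronglyMeasurable ?_
    filter_upwards with x
    rw [Real.norm_eq_abs, abs_mul, abs_of_nonneg (hf0 n x)]
    exact key x
  -- estimate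
  have habs : Integrable (fun x => f n x * |g n x|) μ := by
    refine hfgint.abs.congr (Filter.Eventually.of_forall fun x => ?_)
    simp only [abs_mul, abs_of_nonneg (hf0 n x)]
  have hest : |∫ x, f n x * g n x ∂μ| ≤ l * C' + l * ∫ x, Ψ n x ∂μ := by
    calc |∫ x, f n x * g n x ∂μ| ≤ ∫ x, f n x * |g n x| ∂μ := by
          have h := norm_integral_le_integral_norm (fun x => f n x * g n x) (μ := μ)
          simp only [Real.norm_eq_abs, abs_mul] at h
          rwa [show (fun a => |f n a| * |g n a|) = fun a => f n a * |g n a| from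
            funext fun a => by rw [abs_of_nonneg (hf0 n a)]] at h
      _ ≤ ∫ x, (l * Φ n x + l * Ψ n x) ∂μ := by
          exact integral_mono habs
            (((hΦint n).const_mul l).add ((hΨint n).const_mul l)) key
      _ = l * ∫ x, Φ n x ∂μ + l * ∫ x, Ψ n x ∂μ := by
          rw [integral_add ((hΦint n).const_mul l) ((hΨint n).const_mul l),
            integral_const_mul, integral_const_mul]
      _ ≤ l * C' + l * ∫ x, Ψ n x ∂μ := by
          have := mul_le_mul_of_nonneg_left (hΦle n) hl0.le
          linarith
  have hlC : l * (C' + 1) = ε / 2 := by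
    rw [hldef]; field_simp
  have hΨsmall : l * ∫ x, Ψ n x ∂μ < ε / 2 := by
    have h1 := hN n hn
    rw [Real.dist_eq, sub_zero] at h1
    have h2 : (0:ℝ) ≤ ∫ x, Ψ n x ∂μ := integral_nonneg (hΨ0 n)
    have h3 : ∫ x, Ψ n x ∂μ < ε / (2 * l) := lt_of_abs_lt h1
    have h4 : l * ∫ x, Ψ n x ∂μ < l * (ε / (2 * l)) :=
      mul_lt_mul_of_pos_left h3 hl0
    have h5 : l * (ε / (2 * l)) = ε / 2 := by field_simp
    linarith
  rw [Real.dist_eq, sub_zero]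
  have : l * C' < ε / 2 := by nlinarith
  linarith
end
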